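/- arXiv:1906.10672 — 7 statements merged into one kernel-verified Lean document; each statement's English description precedes it below -/
import Mathlib

section
/- Let Γ be a finite directed multigraph, A a coefficient system on Γ, and e₀ an edge with x = t(e₀) ≠ y = h(e₀) such that the half-edge map A_{e₀,t} : A_x → A_{e₀} is an isomorphism. Let (Γ/e₀, A/α) be the contraction of (Γ, A) along this redundant half-edge. Then the map of cochain complexes π : C(Γ/e₀, A/α) → C(Γ, A) — given by the canonical identifications on all vertices v ∉ {x,y} and all edges f ≠ e₀, and sending a ∈ (A/α)_{[xy]} = A_y to (−A_{e₀,t}^{−1}(A_{e₀,h}(a)), a) ∈ A_x ⊕ A_y — commutes with the differentials and induces isomorphisms H⁰(Γ/e₀, A/α) ≅ H⁰(Γ, A) and H¹(Γ/e₀, A/α) ≅ H¹(Γ, A). -/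
/-- A coefficient system on a finite directed multigraph with vertex type `V`,
edge type `E`, tail map `tl` and head map `hd`. -/
structure CoeffSys {V E : Type} (tl hd : E → V) where
  vert : V → Type
  edge : E → Type
  [vertGrp : ∀ v, AddCommGroup (vert v)]
  [edgeGrp : ∀ e, AddCommGroup (edge e)]
  mapT : ∀ e, vert (tl e) →+ edge e
  mapH : ∀ e, vert (hd e) →+ edge e

attribute [instance] CoeffSys.vertGrp CoeffSys.edgeGrp

namespace CoeffSys

variable {V E : Type} {tl hd : E → V}

/-- The differential of the two-term cochain complex associated to a coefficient system. -/
def d (A : CoeffSys tl hd) : ((v : V) → A.vert v) →+ ((e : E) → A.edge e) where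
  toFun a := fun e => A.mapT e (a (tl e)) + A.mapH e (a (hd e))
  map_zero' := by funext e; simp
  map_add' x y := by funext e; simp only [Pi.add_apply, map_add]; abel

/-- `H⁰(Γ, A)` is the kernel of the differential. -/
abbrev H0 (A : CoeffSys tl hd) : AddSubgroup ((v : V) → A.vert v) := A.d.ker

/-- `H¹(Γ, A)` is the cokernel of the differential. -/
abbrev H1 (A : CoeffSys tl hd) : Type := ((e : E) → A.edge e) ⧸ A.d.range

end CoeffSys

namespace CoeffSys

variable {V E : Type} {tl hd : E → V}

/-- Transport of vertex groups along an equality of vertices. -/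
def vcast (A : CoeffSys tl hd) {u v : V} (huv : u = v) : A.vert u ≃+ A.vert v := by
  subst huv; exact AddEquiv.refl _

/-- The inverse of the (bijective) tail half-edge map at `e₀`, as a homomorphism. -/
noncomputable def invT (A : CoeffSys tl hd) (e₀ : E)
    (hbij : Function.Bijective (A.mapT e₀)) : A.edge e₀ →+ A.vert (tl e₀) :=
  (AddEquiv.ofBijective (A.mapT e₀) hbij).symm.toAddMonoidHom

variable [DecidableEq V] [DecidableEq E]

/-- The map sending a vertex of `Γ` to the corresponding vertex of the contracted graph
`Γ/e₀`, where `x = tl e₀` is identified with `y = hd e₀` (the vertex `[xy]` is represented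
by `hd e₀`). -/
def πV (tl hd : E → V) (e₀ : E) (hne : tl e₀ ≠ hd e₀) (v : V) : {v : V // v ≠ tl e₀} :=
  ⟨if v = tl e₀ then hd e₀ else v, by
    split
    · exact fun hc => hne hc.symm
    · assumption⟩

/-- The half-edge maps of the contracted coefficient system `A/α`: an old half-edge map
`m : A_v →+ A_f` is unchanged if `v ≠ tl e₀`, and if `v = tl e₀` it becomes the composite
`A_y → A_{e₀} → A_x → A_f` where the middle map is `-(A.mapT e₀)⁻¹`. -/
noncomputable def contrHalf (A : CoeffSys tl hd) (e₀ : E)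
    (hbij : Function.Bijective (A.mapT e₀)) {f : E} (v : V) (m : A.vert v →+ A.edge f) :
    A.vert (if v = tl e₀ then hd e₀ else v) →+ A.edge f :=
  if hv : v = tl e₀ then
    m.comp ((A.vcast hv.symm).toAddMonoidHom.comp
      ((-(A.invT e₀ hbij)).comp
        ((A.mapH e₀).comp (A.vcast (if_pos hv)).toAddMonoidHom)))
  else m.comp (A.vcast (if_neg hv)).toAddMonoidHom

/-- The contraction `A/α` of the coefficient system `A` along the redundant tail
half-edge of `e₀`. -/
noncomputable def contrSys (A : CoeffSys tl hd) (e₀ : E) (hne : tl e₀ ≠ hd e₀)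
    (hbij : Function.Bijective (A.mapT e₀)) :
    CoeffSys (fun e' : {e : E // e ≠ e₀} => πV tl hd e₀ hne (tl e'.1))
      (fun e' : {e : E // e ≠ e₀} => πV tl hd e₀ hne (hd e'.1)) where
  vert v' := A.vert v'.1
  edge e' := A.edge e'.1
  mapT e' := A.contrHalf e₀ hbij (tl e'.1) (A.mapT e'.1)
  mapH e' := A.contrHalf e₀ hbij (hd e'.1) (A.mapH e'.1)

/-- The degree-0 part of the comparison map `π : C(Γ/e₀, A/α) → C(Γ, A)`:
`a ↦ (−A_{e₀,t}^{−1}(A_{e₀,h}(a_{[xy]})), a)`. -/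
noncomputable def π0 (A : CoeffSys tl hd) (e₀ : E) (hne : tl e₀ ≠ hd e₀)
    (hbij : Function.Bijective (A.mapT e₀)) :
    ((v' : {v : V // v ≠ tl e₀}) → A.vert v'.1) →+ ((v : V) → A.vert v) where
  toFun a := fun v =>
    if hv : v = tl e₀ then
      A.vcast hv.symm (-(A.invT e₀ hbij (A.mapH e₀ (a ⟨hd e₀, fun hc => hne hc.symm⟩))))
    else a ⟨v, hv⟩
  map_zero' := by
    funext v
    by_cases hv : v = tl e₀ <;> simp [hv]
  map_add' x y := by
    funext v
    by_cases hv : v = tl e₀ <;> simp [hv, neg_add] <;> abel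

/-- The degree-1 part of the comparison map `π : C(Γ/e₀, A/α) → C(Γ, A)`: the canonical
identification on each edge `f ≠ e₀`, and `0` in the component at `e₀`. -/
def π1 (A : CoeffSys tl hd) (e₀ : E) :
    ((e' : {e : E // e ≠ e₀}) → A.edge e'.1) →+ ((e : E) → A.edge e) where
  toFun b := fun e => if he : e = e₀ then 0 else b ⟨e, he⟩
  map_zero' := by
    funext e
    by_cases he : e = e₀ <;> simp [he]
  map_add' x y := by
    funext e
    by_cases he : e = e₀ <;> simp [he]

end CoeffSys


/-!
Since `A_{e₀,t}` is invertible, the value of a 0-cochain at `x = t(e₀)` is forced by its value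
at `y = h(e₀)` once its differential vanishes on `e₀`, and this is exactly the rule by which `π`
fills in `x`. So `π` identifies the 0-cochains of `Γ/e₀` with the 0-cochains of `Γ` whose
differential vanishes on `e₀`, and `π` in degree 1 identifies the 1-cochains of `Γ/e₀` with the
1-cochains of `Γ` vanishing on `e₀`. Every 1-cochain `c` is cohomologous to one vanishing on `e₀`:
subtract the differential of `A_{e₀,t}⁻¹(c_{e₀})` placed at `x`.
-/

namespace CoeffSys

variable {V E : Type} {tl hd : E → V} (A : CoeffSys tl hd) {e₀ : E}

@[simp]
lemma vcast_rfl {u : V} (a : A.vert u) : A.vcast rfl a = a := rfl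

lemma vcast_apply_subtype {p : V → Prop} (b : (v' : Subtype p) → A.vert v'.1) {u w : V}
    (h : u = w) (hu : p u) (hw : p w) : A.vcast h (b ⟨u, hu⟩) = b ⟨w, hw⟩ := by
  subst h
  rfl

section Inverse

variable (hbij : Function.Bijective (A.mapT e₀))

@[simp]
lemma mapT_invT (z : A.edge e₀) : A.mapT e₀ (A.invT e₀ hbij z) = z :=
  (AddEquiv.ofBijective (A.mapT e₀) hbij).apply_symm_apply z

lemma invT_eq_iff {z : A.edge e₀} {a : A.vert (tl e₀)} :
    A.invT e₀ hbij z = a ↔ A.mapT e₀ a = z :=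
  (AddEquiv.ofBijective (A.mapT e₀) hbij).symm_apply_eq.trans eq_comm

lemma d_single_tl_invT_apply_self [DecidableEq V] (hne : tl e₀ ≠ hd e₀) (w : A.edge e₀) :
    A.d (Pi.single (tl e₀) (A.invT e₀ hbij w)) e₀ = w := by
  simp [d, hne.symm]

end Inverse

section Degree1

variable [DecidableEq E]

lemma π1_apply_of_ne (b : (e' : {e : E // e ≠ e₀}) → A.edge e'.1) {e : E} (he : e ≠ e₀) :
    A.π1 e₀ b e = b ⟨e, he⟩ := by
  simp [π1, he]

@[simp]
lemma π1_apply_self (b : (e' : {e : E // e ≠ e₀}) → A.edge e'.1) : A.π1 e₀ b e₀ = 0 := by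
  simp [π1]

lemma π1_restrict {z : (e : E) → A.edge e} (hz : z e₀ = 0) :
    A.π1 e₀ (fun e' => z e'.1) = z := by
  funext e
  by_cases he : e = e₀
  · subst he
    rw [π1_apply_self, hz]
  · exact A.π1_apply_of_ne _ he

end Degree1

section Degree0

variable [DecidableEq V] (hne : tl e₀ ≠ hd e₀) (hbij : Function.Bijective (A.mapT e₀))

lemma π0_apply_of_ne (b : (v' : {v : V // v ≠ tl e₀}) → A.vert v'.1) {v : V}
    (hv : v ≠ tl e₀) : A.π0 e₀ hne hbij b v = b ⟨v, hv⟩ := by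
  simp [π0, hv]

lemma π0_apply_tl (b : (v' : {v : V // v ≠ tl e₀}) → A.vert v'.1) :
    A.π0 e₀ hne hbij b (tl e₀) = -A.invT e₀ hbij (A.mapH e₀ (b ⟨hd e₀, hne.symm⟩)) := by
  simp [π0]

lemma π0_injective : Function.Injective (A.π0 e₀ hne hbij) := fun b b' h =>
  funext fun v' => by
    simpa only [A.π0_apply_of_ne hne hbij _ v'.2] using congrFun h v'.1

lemma d_π0_apply_self (b : (v' : {v : V // v ≠ tl e₀}) → A.vert v'.1) :
    A.d (A.π0 e₀ hne hbij b) e₀ = 0 := by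
  simp [d, A.π0_apply_tl, A.π0_apply_of_ne hne hbij _ hne.symm]

lemma π0_restrict {c : (v : V) → A.vert v} (hc : A.d c e₀ = 0) :
    A.π0 e₀ hne hbij (fun v' => c v'.1) = c := by
  funext v
  by_cases hv : v = tl e₀
  · subst hv
    rw [π0_apply_tl, neg_eq_iff_eq_neg, invT_eq_iff, map_neg]
    exact neg_eq_of_add_eq_zero_right hc
  · exact A.π0_apply_of_ne hne hbij _ hv

lemma contrHalf_apply {f : E} (v : V) (m : A.vert v →+ A.edge f)
    (b : (v' : {v : V // v ≠ tl e₀}) → A.vert v'.1) :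
    A.contrHalf e₀ hbij v m (b (πV tl hd e₀ hne v)) = m (A.π0 e₀ hne hbij b v) := by
  by_cases hv : v = tl e₀
  · subst hv
    simp [contrHalf, πV, A.π0_apply_tl, A.vcast_apply_subtype b _ _ hne.symm]
  · simp [contrHalf, πV, hv, A.π0_apply_of_ne hne hbij _ hv, A.vcast_apply_subtype b _ _ hv]

lemma d_contrSys_apply (b : (v' : {v : V // v ≠ tl e₀}) → A.vert v'.1)
    (e' : {e : E // e ≠ e₀}) :
    (A.contrSys e₀ hne hbij).d b e' = A.d (A.π0 e₀ hne hbij b) e'.1 :=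
  congrArg₂ (· + ·) (A.contrHalf_apply hne hbij _ _ b) (A.contrHalf_apply hne hbij _ _ b)

theorem π1_comp_d_contrSys [DecidableEq E] (b : (v' : {v : V // v ≠ tl e₀}) → A.vert v'.1) :
    A.π1 e₀ ((A.contrSys e₀ hne hbij).d b) = A.d (A.π0 e₀ hne hbij b) := by
  funext e
  by_cases he : e = e₀
  · subst he
    exact (A.π1_apply_self _).trans (A.d_π0_apply_self hne hbij b).symm
  · exact (A.π1_apply_of_ne _ he).trans (A.d_contrSys_apply hne hbij b _)

end Degree0

end CoeffSys

open CoeffSys in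
theorem contraction_iso_general {V E : Type} [DecidableEq V] [DecidableEq E]
    {tl hd : E → V} (A : CoeffSys tl hd) (e₀ : E) (hne : tl e₀ ≠ hd e₀)
    (hbij : Function.Bijective (A.mapT e₀)) :
    (∀ b, A.π1 e₀ ((A.contrSys e₀ hne hbij).d b) = A.d (A.π0 e₀ hne hbij b)) ∧
    (∀ a : (v' : {v : V // v ≠ tl e₀}) → A.vert v'.1,
      (A.contrSys e₀ hne hbij).d a = 0 → A.d (A.π0 e₀ hne hbij a) = 0) ∧
    (∀ a a' : (v' : {v : V // v ≠ tl e₀}) → A.vert v'.1,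
      (A.contrSys e₀ hne hbij).d a = 0 → (A.contrSys e₀ hne hbij).d a' = 0 →
      A.π0 e₀ hne hbij a = A.π0 e₀ hne hbij a' → a = a') ∧
    (∀ c : (v : V) → A.vert v, A.d c = 0 →
      ∃ a, (A.contrSys e₀ hne hbij).d a = 0 ∧ A.π0 e₀ hne hbij a = c) ∧
    (∀ b, A.π1 e₀ b ∈ A.d.range → b ∈ (A.contrSys e₀ hne hbij).d.range) ∧
    (∀ c : (e : E) → A.edge e, ∃ b, c - A.π1 e₀ b ∈ A.d.range) := by
  refine ⟨A.π1_comp_d_contrSys hne hbij, fun a ha => ?_,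
    fun a a' _ _ h => A.π0_injective hne hbij h, fun c hc => ?_, ?_, fun c => ?_⟩
  · rw [← A.π1_comp_d_contrSys, ha]
    exact map_zero (A.π1 e₀)
  · have hc₀ : A.d c e₀ = 0 := congrFun hc e₀
    refine ⟨fun v' => c v'.1, funext fun e' => ?_, A.π0_restrict hne hbij hc₀⟩
    rw [d_contrSys_apply, A.π0_restrict hne hbij hc₀, hc]
    rfl
  · rintro b ⟨c, hc⟩
    have hc₀ : A.d c e₀ = 0 := by rw [hc, π1_apply_self]
    refine ⟨fun v' => c v'.1, funext fun e' => ?_⟩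
    rw [d_contrSys_apply, A.π0_restrict hne hbij hc₀, hc, A.π1_apply_of_ne _ e'.2]
  · set a := Pi.single (tl e₀) (A.invT e₀ hbij (c e₀))
    have ha : A.d a e₀ = c e₀ := A.d_single_tl_invT_apply_self hbij hne (c e₀)
    refine ⟨fun e' => (c - A.d a) e'.1, a, ?_⟩
    rw [A.π1_restrict (by rw [Pi.sub_apply, ha, sub_self]), sub_sub_cancel]

open CoeffSys in
/-- The comparison map `π` from the cochain complex of the contraction
`(Γ/e₀, A/α)` along a redundant (tail) half-edge to the cochain complex of `(Γ, A)`
commutes with the differentials, induces an isomorphism on `H⁰` (it maps the kernel of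
the differential bijectively onto the kernel), and induces an isomorphism on `H¹`
(the induced map of cokernels is injective and surjective). -/
theorem contraction_iso {V E : Type} [Fintype V] [Fintype E] [DecidableEq V] [DecidableEq E]
    {tl hd : E → V} (A : CoeffSys tl hd) (e₀ : E) (hne : tl e₀ ≠ hd e₀)
    (hbij : Function.Bijective (A.mapT e₀)) :
    (∀ b, A.π1 e₀ ((A.contrSys e₀ hne hbij).d b) = A.d (A.π0 e₀ hne hbij b)) ∧
    (∀ a : (v' : {v : V // v ≠ tl e₀}) → A.vert v'.1,
      (A.contrSys e₀ hne hbij).d a = 0 → A.d (A.π0 e₀ hne hbij a) = 0) ∧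
    (∀ a a' : (v' : {v : V // v ≠ tl e₀}) → A.vert v'.1,
      (A.contrSys e₀ hne hbij).d a = 0 → (A.contrSys e₀ hne hbij).d a' = 0 →
      A.π0 e₀ hne hbij a = A.π0 e₀ hne hbij a' → a = a') ∧
    (∀ c : (v : V) → A.vert v, A.d c = 0 →
      ∃ a, (A.contrSys e₀ hne hbij).d a = 0 ∧ A.π0 e₀ hne hbij a = c) ∧
    (∀ b, A.π1 e₀ b ∈ A.d.range → b ∈ (A.contrSys e₀ hne hbij).d.range) ∧
    (∀ c : (e : E) → A.edge e, ∃ b, c - A.π1 e₀ b ∈ A.d.range) :=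
  contraction_iso_general A e₀ hne hbij
end

section
/- Let (Γ, A) be a decorated graph such that Γ is a finite tree admitting a root vertex v₀ with the following property: whenever v is the parent of a vertex w via an edge e, the half-edge map A_w → A_e attached to w is an isomorphism. Then (Γ, A) can be contracted to a point, i.e., there is a finite sequence of contractions of decorated graphs along redundant half-edges taking (Γ, A) to a decorated graph with a single vertex and no edges. -/
namespace CoeffSys

variable {V E : Type} {tl hd : E → V}

/-- The inverse of the (bijective) head half-edge map at `e₀`, as a homomorphism. -/
noncomputable def invH (A : CoeffSys tl hd) (e₀ : E)
    (hbij : Function.Bijective (A.mapH e₀)) : A.edge e₀ →+ A.vert (hd e₀) :=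
  (AddEquiv.ofBijective (A.mapH e₀) hbij).symm.toAddMonoidHom

variable [DecidableEq V] [DecidableEq E]

/-- The analogue of `πV` for contracting the head vertex of `e₀` into the tail vertex. -/
def πVH (tl hd : E → V) (e₀ : E) (hne : tl e₀ ≠ hd e₀) (v : V) : {v : V // v ≠ hd e₀} :=
  ⟨if v = hd e₀ then tl e₀ else v, by
    split
    · exact fun hc => hne hc
    · assumption⟩

/-- The analogue of `contrHalf` for a redundant head half-edge. -/
noncomputable def contrHalfH (A : CoeffSys tl hd) (e₀ : E)
    (hbij : Function.Bijective (A.mapH e₀)) {f : E} (v : V) (m : A.vert v →+ A.edge f) :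
    A.vert (if v = hd e₀ then tl e₀ else v) →+ A.edge f :=
  if hv : v = hd e₀ then
    m.comp ((A.vcast hv.symm).toAddMonoidHom.comp
      ((-(A.invH e₀ hbij)).comp
        ((A.mapT e₀).comp (A.vcast (if_pos hv)).toAddMonoidHom)))
  else m.comp (A.vcast (if_neg hv)).toAddMonoidHom

/-- The contraction of the coefficient system `A` along the redundant head half-edge
of `e₀`. -/
noncomputable def contrSysH (A : CoeffSys tl hd) (e₀ : E) (hne : tl e₀ ≠ hd e₀)
    (hbij : Function.Bijective (A.mapH e₀)) :
    CoeffSys (fun e' : {e : E // e ≠ e₀} => πVH tl hd e₀ hne (tl e'.1))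
      (fun e' : {e : E // e ≠ e₀} => πVH tl hd e₀ hne (hd e'.1)) where
  vert v' := A.vert v'.1
  edge e' := A.edge e'.1
  mapT e' := A.contrHalfH e₀ hbij (tl e'.1) (A.mapT e'.1)
  mapH e' := A.contrHalfH e₀ hbij (hd e'.1) (A.mapH e'.1)

end CoeffSys

/-- A decorated graph: a finite directed multigraph together with a coefficient
system on it. -/
structure DecGraph where
  V : Type
  E : Type
  [fV : Fintype V]
  [fE : Fintype E]
  tl : E → V
  hd : E → V
  A : CoeffSys tl hd

attribute [instance] DecGraph.fV DecGraph.fE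

/-- Contraction of a decorated graph along a redundant tail half-edge. -/
noncomputable def DecGraph.contractT (G : DecGraph) (e₀ : G.E) (hne : G.tl e₀ ≠ G.hd e₀)
    (hbij : Function.Bijective (G.A.mapT e₀)) : DecGraph :=
  letI := Classical.decEq G.V
  letI := Classical.decEq G.E
  { V := {v : G.V // v ≠ G.tl e₀}
    E := {e : G.E // e ≠ e₀}
    tl := fun e' => CoeffSys.πV G.tl G.hd e₀ hne (G.tl e'.1)
    hd := fun e' => CoeffSys.πV G.tl G.hd e₀ hne (G.hd e'.1)
    A := G.A.contrSys e₀ hne hbij }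

/-- Contraction of a decorated graph along a redundant head half-edge. -/
noncomputable def DecGraph.contractH (G : DecGraph) (e₀ : G.E) (hne : G.tl e₀ ≠ G.hd e₀)
    (hbij : Function.Bijective (G.A.mapH e₀)) : DecGraph :=
  letI := Classical.decEq G.V
  letI := Classical.decEq G.E
  { V := {v : G.V // v ≠ G.hd e₀}
    E := {e : G.E // e ≠ e₀}
    tl := fun e' => CoeffSys.πVH G.tl G.hd e₀ hne (G.tl e'.1)
    hd := fun e' => CoeffSys.πVH G.tl G.hd e₀ hne (G.hd e'.1)
    A := G.A.contrSysH e₀ hne hbij }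

/-- One contraction step of decorated graphs: contracting along a redundant half-edge,
attached either to the tail or to the head of an edge whose endpoints are distinct. -/
inductive DecGraph.ContractStep : DecGraph → DecGraph → Prop
  | tail (G : DecGraph) (e₀ : G.E) (hne : G.tl e₀ ≠ G.hd e₀)
      (hbij : Function.Bijective (G.A.mapT e₀)) :
      ContractStep G (G.contractT e₀ hne hbij)
  | head (G : DecGraph) (e₀ : G.E) (hne : G.tl e₀ ≠ G.hd e₀)
      (hbij : Function.Bijective (G.A.mapH e₀)) :
      ContractStep G (G.contractH e₀ hne hbij)

/-- The simple graph underlying a directed multigraph. -/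
def graphOf {V E : Type} (tl hd : E → V) : SimpleGraph V where
  Adj u v := u ≠ v ∧ ∃ e, (tl e = u ∧ hd e = v) ∨ (tl e = v ∧ hd e = u)
  symm := by
    constructor
    rintro u v ⟨huv, e, he⟩
    exact ⟨huv.symm, e, he.symm⟩
  loopless := by
    constructor
    rintro v ⟨hv, -⟩
    exact hv rfl


/-!
Induction on the number of edges. Counting degrees (they sum to `2|E| = 2|V| - 2`), a tree
with an edge has a leaf `w` other than the root. Every walk from the root to `w` ends with
the unique edge `e₀` at `w`, so `w` is the child end of `e₀` and its half-edge map is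
invertible, i.e. redundant. Contracting it deletes `w` and `e₀` and leaves the remaining
vertices, edges and half-edge maps at child ends unchanged, so the result is again such a
rooted tree. A leaf at the head of its edge is handled by reversing all edges.
-/

namespace SimpleGraph

variable {V V' : Type*}

def WalksVisit (H : SimpleGraph V) (u v w : V) : Prop :=
  ∀ p : H.Walk u v, w ∈ p.support

variable {H : SimpleGraph V}

namespace Walk

theorem exists_support_subset_map {H' : SimpleGraph V'} (φ : V → V')
    (hφ : ∀ u v, H.Adj u v → H'.Adj (φ u) (φ v) ∨ φ u = φ v) :
    ∀ {u v : V} (p : H.Walk u v), ∃ q : H'.Walk (φ u) (φ v), q.support ⊆ p.support.map φ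
  | _, _, .nil => ⟨.nil, by simp⟩
  | _, _, .cons h p => by
    obtain ⟨q, hq⟩ := exists_support_subset_map φ hφ p
    rcases hφ _ _ h with hadj | heq
    · exact ⟨.cons hadj q, by simpa using List.cons_subset_cons _ hq⟩
    · exact ⟨q.copy heq.symm rfl, by simpa using List.Subset.trans hq (List.subset_cons_self _ _)⟩

theorem mem_support_of_adj_imp_eq {w z b : V} (hz : ∀ u, H.Adj w u → u = z) (hb : w ≠ b) :
    ∀ p : H.Walk w b, z ∈ p.support
  | .nil => absurd rfl hb
  | .cons h p => by simp [← hz _ h]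

theorem mem_support_of_mem_support_of_adj_imp_eq [DecidableEq V] {w z a b : V}
    (hz : ∀ u, H.Adj w u → u = z) (hb : w ≠ b) (p : H.Walk a b) (hw : w ∈ p.support) :
    z ∈ p.support :=
  p.support_dropUntil_subset_support hw (mem_support_of_adj_imp_eq hz hb _)

end Walk

end SimpleGraph

open Function SimpleGraph

namespace CoeffSys

variable {V E : Type} [DecidableEq V] {tl hd : E → V}

theorem contrHalf_bijective (A : CoeffSys tl hd) {e₀ : E} (hbij : Bijective (A.mapT e₀))
    {f : E} {v : V} (hv : v ≠ tl e₀) {m : A.vert v →+ A.edge f} (hm : Bijective m) :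
    Bijective (A.contrHalf e₀ hbij v m) := by
  rw [contrHalf, dif_neg hv, AddMonoidHom.coe_comp, AddEquiv.coe_toAddMonoidHom]
  exact hm.comp (A.vcast (if_neg hv)).bijective

def reverse (A : CoeffSys tl hd) : CoeffSys hd tl where
  vert := A.vert
  edge := A.edge
  mapT := A.mapH
  mapH := A.mapT

end CoeffSys

theorem graphOf_swap {V E : Type} (tl hd : E → V) : graphOf hd tl = graphOf tl hd := by
  ext u v
  exact and_congr_right' (exists_congr fun e => by tauto)

namespace DecGraph

abbrev graph (G : DecGraph) : SimpleGraph G.V := graphOf G.tl G.hd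

def reverse (G : DecGraph) : DecGraph where
  V := G.V
  E := G.E
  tl := G.hd
  hd := G.tl
  A := G.A.reverse

theorem graph_reverse (G : DecGraph) : G.reverse.graph = G.graph :=
  graphOf_swap G.tl G.hd

def IsPendant (G : DecGraph) (w : G.V) (e₀ : G.E) : Prop :=
  ∀ e, G.tl e = w ∨ G.hd e = w ↔ e = e₀

/-- `G` is a tree rooted at `v₀` in which the half-edge map at the child end of every edge is
bijective; an endpoint of `e` is its child end when every walk from the root to it passes
through the other endpoint. -/
structure IsRootedTree (G : DecGraph) (v₀ : G.V) : Prop where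
  loopless : ∀ e, G.tl e ≠ G.hd e
  connected : G.graph.Connected
  card_V : Fintype.card G.V = Fintype.card G.E + 1
  bijective_mapT : ∀ e, G.graph.WalksVisit v₀ (G.tl e) (G.hd e) → Bijective (G.A.mapT e)
  bijective_mapH : ∀ e, G.graph.WalksVisit v₀ (G.hd e) (G.tl e) → Bijective (G.A.mapH e)

theorem IsRootedTree.reverse {G : DecGraph} {v₀ : G.V} (h : G.IsRootedTree v₀) :
    G.reverse.IsRootedTree v₀ where
  loopless e := (h.loopless e).symm
  connected := G.graph_reverse ▸ h.connected
  card_V := h.card_V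
  bijective_mapT e := G.graph_reverse ▸ h.bijective_mapH e
  bijective_mapH e := G.graph_reverse ▸ h.bijective_mapT e

/-- Contracting a head half-edge is, definitionally, contracting the tail half-edge of the
reversed graph and reversing back. -/
theorem contractStep_reverse_contractT (G : DecGraph) (e₀ : G.E) (hne : G.hd e₀ ≠ G.tl e₀)
    (hbij : Bijective (G.A.mapH e₀)) :
    ContractStep G (G.reverse.contractT e₀ hne hbij).reverse :=
  .head G e₀ hne.symm hbij

open Finset in
theorem exists_isPendant (G : DecGraph) (hconn : G.graph.Connected)
    (hcard : Fintype.card G.V = Fintype.card G.E + 1) (hE : 0 < Fintype.card G.E) (v₀ : G.V) :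
    ∃ w ≠ v₀, ∃ e₀, G.IsPendant w e₀ := by
  classical
  let inc (v : G.V) : Finset G.E := {e | G.tl e = v ∨ G.hd e = v}
  have sum_le : ∑ v, #(inc v) ≤ 2 * Fintype.card G.E := calc
    ∑ v, #(inc v) ≤ ∑ v, (#{e | G.tl e = v} + #{e | G.hd e = v}) :=
      sum_le_sum fun v _ => by simp only [inc, filter_or]; exact card_union_le _ _
    _ = 2 * Fintype.card G.E := by
      rw [sum_add_distrib, ← card_eq_sum_card_fiberwise (f := G.tl) (by simp),
        ← card_eq_sum_card_fiberwise (f := G.hd) (by simp), card_univ]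
      ring
  have inc_pos (v : G.V) : 0 < #(inc v) := by
    obtain ⟨u, hu⟩ := Fintype.exists_ne_of_one_lt_card (by omega) v
    obtain ⟨p⟩ := hconn.preconnected v u
    obtain ⟨-, e, he⟩ := p.adj_snd (Walk.not_nil_of_ne hu.symm)
    exact card_pos.mpr ⟨e, by simp only [inc, mem_filter, mem_univ, true_and]; tauto⟩
  obtain ⟨w, hwv, hw⟩ : ∃ w ≠ v₀, #(inc w) ≤ 1 := by
    -- otherwise the degrees would sum to at least `1 + 2 (|V| - 1) > 2|E|`
    by_contra! hlarge
    have hsplit := add_sum_erase univ (fun v => #(inc v)) (mem_univ v₀)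
    have hrest := card_nsmul_le_sum (univ.erase v₀) (fun v => #(inc v)) 2
      fun v hv => hlarge v (ne_of_mem_erase hv)
    rw [card_erase_of_mem (mem_univ _), card_univ, smul_eq_mul] at hrest
    have := inc_pos v₀
    omega
  obtain ⟨e₀, he₀⟩ := card_eq_one.mp (le_antisymm hw (inc_pos w))
  exact ⟨w, hwv, e₀, fun e => by simpa [inc] using Finset.ext_iff.mp he₀ e⟩

theorem IsPendant.ne_of_ne {G : DecGraph} {w : G.V} {e₀ e : G.E} (hw : G.IsPendant w e₀)
    (he : e ≠ e₀) : G.tl e ≠ w ∧ G.hd e ≠ w :=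
  not_or.mp (mt (hw e).mp he)

theorem IsPendant.eq_hd_of_adj {G : DecGraph} {e₀ : G.E} (hw : G.IsPendant (G.tl e₀) e₀)
    {u : G.V} (h : G.graph.Adj (G.tl e₀) u) : u = G.hd e₀ := by
  obtain ⟨hne, e, ⟨htl, rfl⟩ | ⟨rfl, hhd⟩⟩ := h
  · rw [(hw e).mp (.inl htl)]
  · exact absurd ((hw e).mp (.inr hhd) ▸ rfl) hne

section contractT

variable (G : DecGraph) {e₀ : G.E} (hne : G.tl e₀ ≠ G.hd e₀) (hbij : Bijective (G.A.mapT e₀))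

noncomputable def contractTVert (v : G.V) : (G.contractT e₀ hne hbij).V :=
  letI := Classical.decEq G.V
  letI := Classical.decEq G.E
  CoeffSys.πV G.tl G.hd e₀ hne v

theorem contractT_tl (e : (G.contractT e₀ hne hbij).E) :
    (G.contractT e₀ hne hbij).tl e = G.contractTVert hne hbij (G.tl e.1) :=
  rfl

theorem contractT_hd (e : (G.contractT e₀ hne hbij).E) :
    (G.contractT e₀ hne hbij).hd e = G.contractTVert hne hbij (G.hd e.1) :=
  rfl

theorem contractTVert_of_ne {v : G.V} (hv : v ≠ G.tl e₀) :
    G.contractTVert hne hbij v = ⟨v, hv⟩ :=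
  Subtype.ext (if_neg hv)

theorem contractTVert_tl : G.contractTVert hne hbij (G.tl e₀) = ⟨G.hd e₀, hne.symm⟩ :=
  Subtype.ext (if_pos rfl)

theorem adj_contractTVert_or_eq {u v : G.V} (h : G.graph.Adj u v) :
    (G.contractT e₀ hne hbij).graph.Adj (G.contractTVert hne hbij u)
      (G.contractTVert hne hbij v) ∨ G.contractTVert hne hbij u = G.contractTVert hne hbij v := by
  obtain ⟨-, e, he⟩ := h
  by_cases he₀ : e = e₀
  · subst he₀
    right
    rcases he with ⟨rfl, rfl⟩ | ⟨rfl, rfl⟩ <;>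
      rw [contractTVert_tl, contractTVert_of_ne _ _ _ hne.symm]
  by_cases heq : G.contractTVert hne hbij u = G.contractTVert hne hbij v
  · exact .inr heq
  · refine .inl ⟨heq, ⟨e, he₀⟩, ?_⟩
    rcases he with ⟨rfl, rfl⟩ | ⟨rfl, rfl⟩
    exacts [.inl ⟨rfl, rfl⟩, .inr ⟨rfl, rfl⟩]

theorem connected_contractT (h : G.graph.Connected) :
    (G.contractT e₀ hne hbij).graph.Connected := by
  have : Nonempty (G.contractT e₀ hne hbij).V := ⟨G.contractTVert hne hbij (G.tl e₀)⟩
  refine ⟨fun u v => ?_⟩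
  obtain ⟨p⟩ := h.preconnected u.1 v.1
  obtain ⟨q, -⟩ := p.exists_support_subset_map _ fun _ _ => G.adj_contractTVert_or_eq hne hbij
  exact ⟨q.copy (G.contractTVert_of_ne hne hbij u.2) (G.contractTVert_of_ne hne hbij v.2)⟩

theorem card_V_contractT :
    Fintype.card (G.contractT e₀ hne hbij).V + 1 = Fintype.card G.V := by
  have h : Fintype.card (G.contractT e₀ hne hbij).V = Fintype.card G.V - 1 :=
    @Set.card_ne_eq _ _ _ (G.contractT e₀ hne hbij).fV
  have := Fintype.card_pos_iff.mpr ⟨G.tl e₀⟩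
  omega

theorem card_E_contractT :
    Fintype.card (G.contractT e₀ hne hbij).E + 1 = Fintype.card G.E := by
  have h : Fintype.card (G.contractT e₀ hne hbij).E = Fintype.card G.E - 1 :=
    @Set.card_ne_eq _ _ _ (G.contractT e₀ hne hbij).fE
  have := Fintype.card_pos_iff.mpr ⟨e₀⟩
  omega

/-- Walks in `Γ` push forward to `Γ/e₀`; when `tl e₀` is a leaf, the only vertex a walk can
lose is `tl e₀`, and then it visits its neighbour `hd e₀` as well. -/
theorem walksVisit_of_contractT (hw : G.IsPendant (G.tl e₀) e₀) {a b c : G.V}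
    (hb : b ≠ G.tl e₀) (hc : c ≠ G.tl e₀)
    (H : (G.contractT e₀ hne hbij).graph.WalksVisit (G.contractTVert hne hbij a)
      (G.contractTVert hne hbij b) (G.contractTVert hne hbij c)) :
    G.graph.WalksVisit a b c := by
  classical
  intro p
  obtain ⟨q, hq⟩ := p.exists_support_subset_map _ fun _ _ => G.adj_contractTVert_or_eq hne hbij
  obtain ⟨x, hx, hxc⟩ := List.mem_map.mp (hq (H q))
  rw [G.contractTVert_of_ne hne hbij hc] at hxc
  by_cases hxw : x = G.tl e₀
  · subst hxw
    obtain rfl : G.hd e₀ = c := congrArg Subtype.val ((G.contractTVert_tl hne hbij).symm.trans hxc)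
    exact p.mem_support_of_mem_support_of_adj_imp_eq (fun _ => hw.eq_hd_of_adj) hb.symm hx
  · obtain rfl : x = c := congrArg Subtype.val ((G.contractTVert_of_ne hne hbij hxw).symm.trans hxc)
    exact hx

end contractT

end DecGraph

namespace DecGraph.IsRootedTree

variable {G : DecGraph} {v₀ : G.V}

theorem bijective_mapT_of_isPendant (h : G.IsRootedTree v₀) {e₀ : G.E}
    (hw : G.IsPendant (G.tl e₀) e₀) (hv₀ : v₀ ≠ G.tl e₀) : Bijective (G.A.mapT e₀) :=
  h.bijective_mapT e₀ fun p => by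
    simpa using p.reverse.mem_support_of_adj_imp_eq (fun _ => hw.eq_hd_of_adj) hv₀.symm

theorem contractT (h : G.IsRootedTree v₀) {e₀ : G.E} (hw : G.IsPendant (G.tl e₀) e₀)
    (hbij : Bijective (G.A.mapT e₀)) :
    (G.contractT e₀ (h.loopless e₀) hbij).IsRootedTree (G.contractTVert _ hbij v₀) where
  loopless e := by
    obtain ⟨ht, hh⟩ := hw.ne_of_ne e.2
    rw [contractT_tl, contractT_hd, contractTVert_of_ne _ _ _ ht, contractTVert_of_ne _ _ _ hh]
    exact fun heq => h.loopless e.1 (congrArg Subtype.val heq)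
  connected := G.connected_contractT _ hbij h.connected
  card_V := by
    have := G.card_V_contractT (h.loopless e₀) hbij
    have := G.card_E_contractT (h.loopless e₀) hbij
    have := h.card_V
    omega
  bijective_mapT e H := by
    classical
    obtain ⟨ht, hh⟩ := hw.ne_of_ne e.2
    exact G.A.contrHalf_bijective hbij ht
      (h.bijective_mapT e.1 (G.walksVisit_of_contractT _ hbij hw ht hh H))
  bijective_mapH e H := by
    classical
    obtain ⟨ht, hh⟩ := hw.ne_of_ne e.2
    exact G.A.contrHalf_bijective hbij hh
      (h.bijective_mapH e.1 (G.walksVisit_of_contractT _ hbij hw hh ht H))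

theorem exists_contractStep (h : G.IsRootedTree v₀) (hE : 0 < Fintype.card G.E) :
    ∃ (G' : DecGraph) (v₀' : G'.V), ContractStep G G' ∧ G'.IsRootedTree v₀' ∧
      Fintype.card G'.E < Fintype.card G.E := by
  obtain ⟨w, hwv, e₀, hw⟩ := G.exists_isPendant h.connected h.card_V hE v₀
  rcases (hw e₀).mpr rfl with rfl | rfl
  · have hbij := h.bijective_mapT_of_isPendant hw hwv.symm
    have := G.card_E_contractT (h.loopless e₀) hbij
    exact ⟨_, _, .tail G e₀ _ hbij, h.contractT hw hbij, by omega⟩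
  · have hw' : G.reverse.IsPendant (G.reverse.tl e₀) e₀ := fun e => or_comm.trans (hw e)
    have hbij := h.reverse.bijective_mapT_of_isPendant hw' hwv.symm
    have := G.reverse.card_E_contractT (h.reverse.loopless e₀) hbij
    exact ⟨_, _, G.contractStep_reverse_contractT e₀ _ hbij,
      (h.reverse.contractT hw' hbij).reverse, Nat.lt_of_lt_of_eq (Nat.lt_succ_self _) this⟩

theorem exists_contraction_to_point (h : G.IsRootedTree v₀) :
    ∃ G' : DecGraph, Relation.ReflTransGen ContractStep G G' ∧
      Nonempty (Unique G'.V) ∧ IsEmpty G'.E := by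
  induction hn : Fintype.card G.E using Nat.strong_induction_on generalizing G v₀ with
  | _ n ih =>
  rcases Nat.eq_zero_or_pos n with rfl | hE
  · exact ⟨G, .refl, Fintype.card_eq_one_iff_nonempty_unique.mp (by rw [h.card_V, hn]),
      Fintype.card_eq_zero_iff.mp hn⟩
  · obtain ⟨G', v₀', hstep, h', hlt⟩ := h.exists_contractStep (hn ▸ hE)
    obtain ⟨G'', hG'', hV, hE⟩ := ih _ (hn ▸ hlt) h' rfl
    exact ⟨G'', .head hstep hG'', hV, hE⟩

end DecGraph.IsRootedTree

/-- A decorated graph whose underlying graph is a finite tree, with a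
root `v₀` such that the half-edge map attached to the child of each edge is an
isomorphism, can be contracted to a point (a single vertex and no edges) by a finite
sequence of contractions along redundant half-edges. -/
theorem tree_contracts_to_point (G : DecGraph)
    (hloop : ∀ e : G.E, G.tl e ≠ G.hd e)
    (hconn : (graphOf G.tl G.hd).Connected)
    (hcard : Fintype.card G.V = Fintype.card G.E + 1)
    (v₀ : G.V)
    (hrootT : ∀ e : G.E,
      (∀ p : (graphOf G.tl G.hd).Walk v₀ (G.tl e), p.IsPath → G.hd e ∈ p.support) →
      Function.Bijective (G.A.mapT e))
    (hrootH : ∀ e : G.E,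
      (∀ p : (graphOf G.tl G.hd).Walk v₀ (G.hd e), p.IsPath → G.tl e ∈ p.support) →
      Function.Bijective (G.A.mapH e)) :
    ∃ G' : DecGraph, Relation.ReflTransGen DecGraph.ContractStep G G' ∧
      Nonempty (Unique G'.V) ∧ IsEmpty G'.E :=
  DecGraph.IsRootedTree.exists_contraction_to_point (v₀ := v₀)
    ⟨hloop, hconn, hcard, fun e H => hrootT e fun p _ => H p, fun e H => hrootH e fun p _ => H p⟩
end

section
/- Let Γ be a finite tree and A a coefficient system on Γ. Suppose there is a root vertex v₀ such that whenever v is the parent of a vertex w via an edge e, the half-edge map A_w → A_e attached to w is an isomorphism. Then H¹(Γ, A) = 0, and H⁰(Γ, A) is isomorphic to A_{v₀}. -/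
/-!
Rank the vertices by their distance to the root. Counting edges shows that `Γ` is a tree, so every
vertex `v ≠ v₀` has a parent edge `e`, joining it to a vertex of smaller rank, and the half-edge map
of `e` at `v` is bijective; counting again, every edge is the parent edge of exactly one vertex.
The system `a v₀ = x`, `d a = b` is therefore triangular: the equation on the parent edge of `v`
determines `a v` from values of smaller rank. So `a ↦ (a v₀, d a)` is bijective, which gives both
`H¹ = 0` and `H⁰ ≅ A_{v₀}`.
-/

section Triangular

variable {V : Type*} [DecidableEq V] {X : V → Type*}

theorem existsUnique_of_triangular [∀ v, Nonempty (X v)] (r : V → ℕ)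
    (P : V → (∀ v, X v) → Prop)
    (hlocal : ∀ v a a', (∀ w, r w < r v ∨ w = v → a w = a' w) → (P v a ↔ P v a'))
    (hsolve : ∀ v a, ∃! y, P v (Function.update a v y)) :
    ∃! a : ∀ v, X v, ∀ v, P v a := by
  choose f hf hf_unique using hsolve
  have hwf := (measure r).wf
  let trunc (a : ∀ v, X v) (v : V) : ∀ w, X w :=
    fun w => if r w < r v then a w else Classical.arbitrary _
  let a : ∀ v, X v := hwf.fix fun v rec =>
    f v fun w => if h : r w < r v then rec w h else Classical.arbitrary _
  have ha : ∀ v, a v = f v (trunc a v) := fun v => hwf.fix_eq _ v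
  have hPa : ∀ v, P v a := by
    intro v
    refine (hlocal v _ _ ?_).1 (hf v (trunc a v))
    rintro w (hw | rfl)
    · simp [Function.update_of_ne (ne_of_apply_ne r hw.ne), trunc, hw]
    · simp [ha]
  refine ⟨a, hPa, fun a' ha' => funext fun v => ?_⟩
  induction hv : r v using Nat.strong_induction_on generalizing v with
  | _ n ih =>
    subst hv
    have hlow : ∀ w, r w < r v ∨ w = v → Function.update a v (a' v) w = a' w := by
      rintro w (hw | rfl)
      · rw [Function.update_of_ne (ne_of_apply_ne r hw.ne), ih _ hw w rfl]
      · exact Function.update_self ..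
    calc a' v = f v a := hf_unique v a _ ((hlocal v _ _ hlow).2 (ha' v))
      _ = a v := (hf_unique v a _ (by simpa using hPa v)).symm

end Triangular

theorem SimpleGraph.IsTree.exists_adj_dist_lt_forall_mem_support {V : Type*}
    {G : SimpleGraph V} (hG : G.IsTree) {v₀ v : V} (hv : v ≠ v₀) :
    ∃ u, G.Adj u v ∧ G.dist v₀ u < G.dist v₀ v ∧
      ∀ p : G.Walk v₀ v, p.IsPath → u ∈ p.support := by
  obtain ⟨q, hq⟩ := hG.connected.exists_walk_length_eq_dist v₀ v
  have hq_pos : 0 < q.length := hq ▸ hG.connected.pos_dist_of_ne hv.symm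
  have hnil : ¬ q.Nil := Walk.not_nil_iff_lt_length.2 hq_pos
  refine ⟨q.penultimate, Walk.adj_penultimate hnil, ?_, fun p hp => ?_⟩
  · have := dist_le q.dropLast
    rw [Walk.length_dropLast] at this
    omega
  · rw [(hG.existsUnique_path v₀ v).unique hp (q.isPath_of_length_eq_dist hq)]
    exact q.getVert_mem_support _

section

variable {V E : Type} {tl hd : E → V}

theorem graphOf_isTree [Fintype V] [Fintype E] (hconn : (graphOf tl hd).Connected)
    (hcard : Fintype.card V = Fintype.card E + 1) : (graphOf tl hd).IsTree := by
  have hsub : (graphOf tl hd).edgeSet ⊆ Set.range fun e => s(tl e, hd e) := by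
    rintro ⟨u, v⟩ ⟨-, e, ⟨rfl, rfl⟩ | ⟨rfl, rfl⟩⟩
    · exact ⟨e, rfl⟩
    · exact ⟨e, Sym2.eq_swap⟩
  have hle : Nat.card (graphOf tl hd).edgeSet ≤ Nat.card E :=
    (Nat.card_mono (Set.finite_range _) hsub).trans (Finite.card_range_le _)
  have hge := hconn.card_vert_le_card_edgeSet_add_one
  refine SimpleGraph.isTree_iff_connected_and_card.2 ⟨hconn, ?_⟩
  rw [Nat.card_eq_fintype_card (α := V)] at hge ⊢
  rw [Nat.card_eq_fintype_card (α := E)] at hle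
  omega

namespace CoeffSys

variable {A : CoeffSys tl hd}

theorem d_apply (a : ∀ v, A.vert v) (e : E) :
    A.d a e = A.mapT e (a (tl e)) + A.mapH e (a (hd e)) := rfl

variable (A) in
def IsParentEdge (r : V → ℕ) (v : V) (e : E) : Prop :=
  (tl e = v ∧ r (hd e) < r v ∧ Function.Bijective (A.mapT e)) ∨
  (hd e = v ∧ r (tl e) < r v ∧ Function.Bijective (A.mapH e))

namespace IsParentEdge

variable {r : V → ℕ} {v : V} {e : E}

theorem unique {w : V} (hv : A.IsParentEdge r v e) (hw : A.IsParentEdge r w e) : v = w := by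
  rcases hv with ⟨rfl, hv, -⟩ | ⟨rfl, hv, -⟩ <;> rcases hw with ⟨hw', hw, -⟩ | ⟨hw', hw, -⟩ <;>
    subst hw' <;> first | rfl | omega

theorem d_apply_congr (he : A.IsParentEdge r v e) {a a' : ∀ w, A.vert w}
    (h : ∀ w, r w < r v ∨ w = v → a w = a' w) : A.d a e = A.d a' e := by
  rcases he with ⟨rfl, hlt, -⟩ | ⟨rfl, hlt, -⟩ <;>
    simp only [d_apply, h _ (.inl hlt), h _ (.inr rfl)]

theorem existsUnique_d_update [DecidableEq V] (he : A.IsParentEdge r v e)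
    (a : ∀ v, A.vert v) (c : A.edge e) : ∃! y, A.d (Function.update a v y) e = c := by
  rcases he with ⟨rfl, hlt, hbij⟩ | ⟨rfl, hlt, hbij⟩
  · simpa [d_apply, Function.update_of_ne (ne_of_apply_ne r hlt.ne), ← eq_sub_iff_add_eq]
      using hbij.existsUnique (c - A.mapH e (a (hd e)))
  · simpa [d_apply, Function.update_of_ne (ne_of_apply_ne r hlt.ne), ← eq_sub_iff_add_eq']
      using hbij.existsUnique (c - A.mapT e (a (tl e)))

end IsParentEdge

theorem existsUnique_eq_and_d_eq {r : V → ℕ} {v₀ : V} (pe : {v // v ≠ v₀} → E)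
    (hpe : ∀ v, A.IsParentEdge r v.1 (pe v)) (hsurj : Function.Surjective pe)
    (x : A.vert v₀) (b : ∀ e, A.edge e) : ∃! a : ∀ v, A.vert v, a v₀ = x ∧ A.d a = b := by
  classical
  let P (v : V) (a : ∀ v, A.vert v) : Prop :=
    if h : v = v₀ then a v₀ = x else A.d a (pe ⟨v, h⟩) = b (pe ⟨v, h⟩)
  have hsystem : ∀ a, (∀ v, P v a) ↔ a v₀ = x ∧ A.d a = b := by
    refine fun a => ⟨fun ha => ⟨by simpa [P] using ha v₀, funext fun e => ?_⟩,
      fun ⟨ha₀, hdb⟩ v => ?_⟩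
    · obtain ⟨⟨v, hv⟩, rfl⟩ := hsurj e
      simpa [P, hv] using ha v
    · by_cases hv : v = v₀ <;> simp [P, hv, ha₀, hdb]
  refine (existsUnique_congr hsystem).1 (existsUnique_of_triangular r P ?_ ?_)
  · intro v a a' h
    by_cases hv : v = v₀
    · subst hv
      simp [P, h v (.inr rfl)]
    · simp only [P, dif_neg hv, (hpe ⟨v, hv⟩).d_apply_congr h]
  · intro v a
    by_cases hv : v = v₀
    · subst hv
      simp [P]
    · simpa [P, hv] using (hpe ⟨v, hv⟩).existsUnique_d_update a _

theorem H1_eq_zero_of_surjective (h : Function.Surjective A.d) (z : A.H1) : z = 0 := by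
  induction z using QuotientAddGroup.induction_on with
  | H b =>
    obtain ⟨a, rfl⟩ := h b
    exact (QuotientAddGroup.eq_zero_iff _).2 ⟨a, rfl⟩

theorem nonempty_H0_addEquiv_vert {v₀ : V}
    (h : ∀ x : A.vert v₀, ∃! a : ∀ v, A.vert v, a v₀ = x ∧ A.d a = 0) :
    Nonempty (A.H0 ≃+ A.vert v₀) := by
  refine ⟨AddEquiv.ofBijective ((Pi.evalAddMonoidHom A.vert v₀).comp A.H0.subtype) ⟨?_, ?_⟩⟩
  · rintro ⟨a, ha⟩ ⟨a', ha'⟩ h'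
    exact Subtype.ext <| (h (a v₀)).unique ⟨rfl, ha⟩ ⟨h'.symm, ha'⟩
  · intro x
    obtain ⟨a, ⟨rfl, ha⟩, -⟩ := h x
    exact ⟨⟨a, ha⟩, rfl⟩

theorem exists_isParentEdge {v₀ : V} (hT : (graphOf tl hd).IsTree)
    (hrootT : ∀ e : E,
      (∀ p : (graphOf tl hd).Walk v₀ (tl e), p.IsPath → hd e ∈ p.support) →
      Function.Bijective (A.mapT e))
    (hrootH : ∀ e : E,
      (∀ p : (graphOf tl hd).Walk v₀ (hd e), p.IsPath → tl e ∈ p.support) →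
      Function.Bijective (A.mapH e))
    {v : V} (hv : v ≠ v₀) : ∃ e, A.IsParentEdge ((graphOf tl hd).dist v₀) v e := by
  obtain ⟨u, ⟨-, e, he⟩, hlt, hmem⟩ := hT.exists_adj_dist_lt_forall_mem_support hv
  rcases he with ⟨rfl, rfl⟩ | ⟨rfl, rfl⟩
  · exact ⟨e, .inr ⟨rfl, hlt, hrootH e hmem⟩⟩
  · exact ⟨e, .inl ⟨rfl, hlt, hrootT e hmem⟩⟩

theorem surjective_of_isParentEdge [Fintype V] [Fintype E] {r : V → ℕ} {v₀ : V}
    {pe : {v // v ≠ v₀} → E} (hpe : ∀ v, A.IsParentEdge r v.1 (pe v))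
    (hcard : Fintype.card V = Fintype.card E + 1) : Function.Surjective pe := by
  classical
  refine ((Fintype.bijective_iff_injective_and_card pe).2 ⟨fun v w h => ?_, ?_⟩).2
  · exact Subtype.ext ((hpe v).unique (h ▸ hpe w))
  · simp [hcard]

end CoeffSys

end

open CoeffSys in
theorem tree_H1_trivial_H0_root_general {V E : Type} [Fintype V] [Fintype E]
    {tl hd : E → V} (A : CoeffSys tl hd)
    (hconn : (graphOf tl hd).Connected)
    (hcard : Fintype.card V = Fintype.card E + 1)
    (v₀ : V)
    (hrootT : ∀ e : E,
      (∀ p : (graphOf tl hd).Walk v₀ (tl e), p.IsPath → hd e ∈ p.support) →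
      Function.Bijective (A.mapT e))
    (hrootH : ∀ e : E,
      (∀ p : (graphOf tl hd).Walk v₀ (hd e), p.IsPath → tl e ∈ p.support) →
      Function.Bijective (A.mapH e)) :
    (∀ x : A.H1, x = 0) ∧ Nonempty (A.H0 ≃+ A.vert v₀) := by
  have hT := graphOf_isTree hconn hcard
  choose pe hpe using fun v : {v // v ≠ v₀} => exists_isParentEdge hT hrootT hrootH v.2
  have hsolve := existsUnique_eq_and_d_eq pe hpe (surjective_of_isParentEdge hpe hcard)
  refine ⟨H1_eq_zero_of_surjective fun b => ?_, nonempty_H0_addEquiv_vert (hsolve · 0)⟩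
  obtain ⟨a, ⟨-, ha⟩, -⟩ := hsolve 0 b
  exact ⟨a, ha⟩

open CoeffSys in
/-- If `Γ` is a finite tree with a root `v₀` such that the half-edge
map attached to the child vertex of each edge is an isomorphism, then `H¹(Γ, A) = 0`
and `H⁰(Γ, A)` is isomorphic to the group at the root. -/
theorem tree_H1_trivial_H0_root {V E : Type} [Fintype V] [Fintype E]
    {tl hd : E → V} (A : CoeffSys tl hd)
    (hloop : ∀ e : E, tl e ≠ hd e)
    (hconn : (graphOf tl hd).Connected)
    (hcard : Fintype.card V = Fintype.card E + 1)
    (v₀ : V)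
    (hrootT : ∀ e : E,
      (∀ p : (graphOf tl hd).Walk v₀ (tl e), p.IsPath → hd e ∈ p.support) →
      Function.Bijective (A.mapT e))
    (hrootH : ∀ e : E,
      (∀ p : (graphOf tl hd).Walk v₀ (hd e), p.IsPath → tl e ∈ p.support) →
      Function.Bijective (A.mapH e)) :
    (∀ x : A.H1, x = 0) ∧ Nonempty (A.H0 ≃+ A.vert v₀) :=
  tree_H1_trivial_H0_root_general A hconn hcard v₀ hrootT hrootH
end

section
/- Let k be a field of characteristic different from 2 containing an element i with i² = −1, and let a, b ∈ k. Let L/k be a field extension containing elements α, β with α² = a and β² = b such that L = k(α, β) and [L : k] = 4. Assume that the quadratic form x² + a·y² − b·z² is anisotropic over k, i.e., the only solution of x² + a·y² − b·z² = 0 with x, y, z ∈ k is x = y = z = 0. Then the image of i in L is a norm-one element (N_{L/k}(i) = 1) whose class in ᴺL^× / I_G L^× is nontrivial; that is, i does not lie in the subgroup of L^× generated by the elements σ(x)/x with σ ∈ Gal(L/k) and x ∈ L^×. -/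
/-!
Let `F = k(α)`, let `τ` be the generator of `Gal(L/F)` (`α ↦ α`, `β ↦ -β`) and `s` the
automorphism `α ↦ -α`, `β ↦ β`. Since `G` is abelian, `N_{L/F}(σ x / x) = σ(m) / m` with
`m = N_{L/F}(x) = x τ(x) ∈ F`, which is `1` if `σ` fixes `F` and `s(m) / m` otherwise. So
`I_G L^×` lies in the preimage under `N_{L/F}` of `{s(m) / m : m ∈ N_{L/F}(L^×)}`.
But `N_{L/F}(i) = i² = -1`, while `m + s(m)` is twice the `k`-coordinate of `m`; for
`x = c₀ + c₁α + c₂β + c₃αβ` that coordinate is the Pfister form `c₀² + ac₁² - bc₂² - abc₃²`,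
which is anisotropic together with `x² + ay² - bz²`.
-/

namespace Biquadratic

open Function Module

section Combination

variable (k : Type*) {A B : Type*} [CommRing k] [CommRing A] [Algebra k A] [CommRing B]
  [Algebra k B]

noncomputable def combination (α β : A) : (Fin 4 → k) →ₗ[k] A :=
  Fintype.linearCombination k ![1, α, β, α * β]

variable {k}

theorem combination_apply (α β : A) (c : Fin 4 → k) :
    combination k α β c = algebraMap k A (c 0) + algebraMap k A (c 1) * α +
      algebraMap k A (c 2) * β + algebraMap k A (c 3) * (α * β) := by
  simp [combination, Fintype.linearCombination_apply, Fin.sum_univ_four, Algebra.smul_def]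

theorem map_combination (f : A →ₐ[k] B) (α β : A) (c : Fin 4 → k) :
    f (combination k α β c) = combination k (f α) (f β) c := by
  simp [combination_apply]

def mulCoeffs (a b : k) (c d : Fin 4 → k) : Fin 4 → k :=
  ![c 0 * d 0 + a * c 1 * d 1 + b * c 2 * d 2 + a * b * c 3 * d 3,
    c 0 * d 1 + c 1 * d 0 + b * (c 2 * d 3 + c 3 * d 2),
    c 0 * d 2 + c 2 * d 0 + a * (c 1 * d 3 + c 3 * d 1),
    c 0 * d 3 + c 3 * d 0 + c 1 * d 2 + c 2 * d 1]

theorem combination_mul {a b : k} {α β : A} (hα : α ^ 2 = algebraMap k A a)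
    (hβ : β ^ 2 = algebraMap k A b) (c d : Fin 4 → k) :
    combination k α β c * combination k α β d = combination k α β (mulCoeffs a b c d) := by
  simp only [combination_apply, mulCoeffs, Matrix.cons_val, map_add, map_mul]
  set ι := algebraMap k A
  linear_combination
    (ι (c 1) * ι (d 1) + ι (c 3) * ι (d 3) * β ^ 2 + (ι (c 1) * ι (d 3) + ι (c 3) * ι (d 1)) * β) * hα
    + (ι (c 2) * ι (d 2) + ι (c 3) * ι (d 3) * ι a + (ι (c 2) * ι (d 3) + ι (c 3) * ι (d 2)) * α) * hβ

theorem combination_surjective {a b : k} {α β : A} (hα : α ^ 2 = algebraMap k A a)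
    (hβ : β ^ 2 = algebraMap k A b) (hgen : Algebra.adjoin k {α, β} = ⊤) :
    Surjective (combination k α β) := by
  let R : Subalgebra k A := (LinearMap.range (combination k α β)).toSubalgebra
    ⟨![1, 0, 0, 0], by simp [combination_apply]⟩
    (by rintro _ _ ⟨c, rfl⟩ ⟨d, rfl⟩; exact ⟨_, (combination_mul hα hβ c d).symm⟩)
  have hR : Algebra.adjoin k {α, β} ≤ R := Algebra.adjoin_le <| by
    rintro _ (rfl | rfl)
    exacts [⟨![0, 1, 0, 0], by simp [combination_apply]⟩,
      ⟨![0, 0, 1, 0], by simp [combination_apply]⟩]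
  rw [hgen] at hR
  exact fun z => hR Algebra.mem_top

theorem combination_bijective {k L : Type*} [Field k] [Field L] [Algebra k L]
    [FiniteDimensional k L] {a b : k} {α β : L} (hα : α ^ 2 = algebraMap k L a)
    (hβ : β ^ 2 = algebraMap k L b) (hgen : Algebra.adjoin k {α, β} = ⊤)
    (hdim : finrank k L = 4) : Bijective (combination k α β) := by
  have hsurj := combination_surjective hα hβ hgen
  refine ⟨?_, hsurj⟩
  rwa [LinearMap.injective_iff_surjective_of_finrank_eq_finrank (by rw [finrank_fin_fun, hdim])]

end Combination

structure IsBiquadratic (k : Type*) {L : Type*} [CommRing k] [CommRing L] [Algebra k L]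
    (a b : k) (α β : L) : Prop where
  sq_fst : α ^ 2 = algebraMap k L a
  sq_snd : β ^ 2 = algebraMap k L b
  bijective : Bijective (combination k α β)

namespace IsBiquadratic

section Lift

variable {k L A : Type*} [CommRing k] [CommRing L] [Algebra k L] [CommRing A] [Algebra k A]
  {a b : k} {α β : L}

noncomputable def lift (h : IsBiquadratic k a b α β) {α' β' : A}
    (hα' : α' ^ 2 = algebraMap k A a) (hβ' : β' ^ 2 = algebraMap k A b) : L →ₐ[k] A :=
  let e := LinearEquiv.ofBijective _ h.bijective
  AlgHom.ofLinearMap (combination k α' β' ∘ₗ e.symm.toLinearMap)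
    (by
      have h1 : (1 : L) = e ![1, 0, 0, 0] := by simp [e, combination_apply]
      simp [h1, combination_apply])
    (by
      intro x y
      obtain ⟨c, rfl⟩ := e.surjective x
      obtain ⟨d, rfl⟩ := e.surjective y
      have hmul : e c * e d = e (mulCoeffs a b c d) := combination_mul h.sq_fst h.sq_snd c d
      simp [hmul, combination_mul hα' hβ'])

theorem lift_combination (h : IsBiquadratic k a b α β) {α' β' : A}
    (hα' : α' ^ 2 = algebraMap k A a) (hβ' : β' ^ 2 = algebraMap k A b) (c : Fin 4 → k) :
    h.lift hα' hβ' (combination k α β c) = combination k α' β' c := by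
  simp [lift]

theorem lift_fst (h : IsBiquadratic k a b α β) {α' β' : A} (hα' : α' ^ 2 = algebraMap k A a)
    (hβ' : β' ^ 2 = algebraMap k A b) : h.lift hα' hβ' α = α' := by
  simpa [combination_apply] using h.lift_combination hα' hβ' ![0, 1, 0, 0]

theorem lift_snd (h : IsBiquadratic k a b α β) {α' β' : A} (hα' : α' ^ 2 = algebraMap k A a)
    (hβ' : β' ^ 2 = algebraMap k A b) : h.lift hα' hβ' β = β' := by
  simpa [combination_apply] using h.lift_combination hα' hβ' ![0, 0, 1, 0]

theorem algHom_ext (h : IsBiquadratic k a b α β) {f g : L →ₐ[k] A} (hα : f α = g α)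
    (hβ : f β = g β) : f = g := by
  ext z
  obtain ⟨c, rfl⟩ := h.bijective.surjective z
  rw [map_combination, map_combination, hα, hβ]

end Lift

section Automorphisms

variable {k L : Type*} [CommRing k] [Field L] [Algebra k L] {a b : k} {α β : L}

noncomputable def negSnd (h : IsBiquadratic k a b α β) : L →ₐ[k] L :=
  h.lift h.sq_fst (by rw [neg_sq, h.sq_snd])

noncomputable def negFst (h : IsBiquadratic k a b α β) : L →ₐ[k] L :=
  h.lift (by rw [neg_sq, h.sq_fst]) h.sq_snd

@[simp] theorem negSnd_fst (h : IsBiquadratic k a b α β) : h.negSnd α = α := h.lift_fst ..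
@[simp] theorem negSnd_snd (h : IsBiquadratic k a b α β) : h.negSnd β = -β := h.lift_snd ..
@[simp] theorem negFst_fst (h : IsBiquadratic k a b α β) : h.negFst α = -α := h.lift_fst ..
@[simp] theorem negFst_snd (h : IsBiquadratic k a b α β) : h.negFst β = β := h.lift_snd ..

theorem negSnd_negSnd (h : IsBiquadratic k a b α β) (x : L) : h.negSnd (h.negSnd x) = x := by
  have : h.negSnd.comp h.negSnd = AlgHom.id k L := h.algHom_ext (by simp) (by simp)
  exact DFunLike.congr_fun this x

theorem negFst_negSnd_comm (h : IsBiquadratic k a b α β) (x : L) :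
    h.negFst (h.negSnd x) = h.negSnd (h.negFst x) := by
  have : h.negFst.comp h.negSnd = h.negSnd.comp h.negFst := h.algHom_ext (by simp) (by simp)
  exact DFunLike.congr_fun this x

theorem algHom_eq_id_or_negSnd_or_negFst_or_comp (h : IsBiquadratic k a b α β)
    (σ : L →ₐ[k] L) :
    σ = AlgHom.id k L ∨ σ = h.negSnd ∨ σ = h.negFst ∨ σ = h.negFst.comp h.negSnd := by
  have hσα : σ α = α ∨ σ α = -α :=
    sq_eq_sq_iff_eq_or_eq_neg.mp (by rw [← map_pow, h.sq_fst, AlgHom.commutes])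
  have hσβ : σ β = β ∨ σ β = -β :=
    sq_eq_sq_iff_eq_or_eq_neg.mp (by rw [← map_pow, h.sq_snd, AlgHom.commutes])
  rcases hσα with hα | hα <;> rcases hσβ with hβ | hβ
  · exact .inl (h.algHom_ext (by simp [hα]) (by simp [hβ]))
  · exact .inr (.inl (h.algHom_ext (by simp [hα]) (by simp [hβ])))
  · exact .inr (.inr (.inl (h.algHom_ext (by simp [hα]) (by simp [hβ]))))
  · exact .inr (.inr (.inr (h.algHom_ext (by simp [hα]) (by simp [hβ]))))

end Automorphisms

end IsBiquadratic

section RelNorm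

variable {M : Type*} [CommMonoid M]

def relNorm (τ : M →* M) : Mˣ →* Mˣ := MonoidHom.id Mˣ * Units.map τ

def relNormPreimage (τ s : M →* M) : Subgroup Mˣ :=
  ((Units.map s / MonoidHom.id Mˣ).comp (relNorm τ)).range.comap (relNorm τ)

theorem map_div_mem_relNormPreimage {τ s σ : M →* M} (hτ : ∀ m, τ (τ m) = m)
    (hστ : ∀ m, σ (τ m) = τ (σ m))
    (hσ : (∀ m, τ m = m → σ m = m) ∨ (∀ m, τ m = m → σ m = s m)) (x : Mˣ) :
    Units.map σ x / x ∈ relNormPreimage τ s := by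
  set n := relNorm τ x
  have hn : τ n = n := by simp [n, relNorm, hτ, mul_comm]
  have hσn : relNorm τ (Units.map σ x / x) = Units.map σ n / n := by
    rw [map_div]
    congr 1
    ext
    simp [relNorm, n, hστ]
  rw [relNormPreimage, Subgroup.mem_comap, hσn]
  rcases hσ with hσ | hσ
  · have : Units.map σ n = n := Units.ext (hσ _ hn)
    exact ⟨1, by simp [this]⟩
  · have : Units.map σ n = Units.map s n := Units.ext (hσ _ hn)
    exact ⟨x, by rw [this]; rfl⟩

end RelNorm

section Pfister

variable {k : Type*} [Field k]

def pfisterForm (a b : k) (c : Fin 4 → k) : k :=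
  c 0 ^ 2 + a * c 1 ^ 2 - b * c 2 ^ 2 - a * b * c 3 ^ 2

/- `pfisterForm a b = ⟨1, a⟩ ⊗ ⟨1, -b⟩` and `⟨1, a⟩` is multiplicative:
`(c₀² + a c₁²) (c₂² + a c₃²) = (c₀ c₂ - a c₁ c₃)² + a (c₀ c₃ + c₁ c₂)²`. -/
theorem eq_zero_of_pfisterForm_eq_zero {a b : k}
    (haniso : ∀ x y z : k, x ^ 2 + a * y ^ 2 - b * z ^ 2 = 0 → x = 0 ∧ y = 0 ∧ z = 0)
    {c : Fin 4 → k} (hc : pfisterForm a b c = 0) : c = 0 := by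
  unfold pfisterForm at hc
  have h23 : c 2 ^ 2 + a * c 3 ^ 2 = 0 := by
    by_contra hne
    exact hne (haniso (c 0 * c 2 - a * c 1 * c 3) (c 0 * c 3 + c 1 * c 2)
      (c 2 ^ 2 + a * c 3 ^ 2) (by linear_combination (c 2 ^ 2 + a * c 3 ^ 2) * hc)).2.2
  obtain ⟨h2, h3, -⟩ := haniso (c 2) (c 3) 0 (by linear_combination h23)
  obtain ⟨h0, h1, -⟩ := haniso (c 0) (c 1) 0 (by linear_combination hc + b * h23)
  ext i
  fin_cases i <;> assumption

end Pfister

namespace IsBiquadratic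

variable {k L : Type*} [Field k] [Field L] [Algebra k L] {a b : k} {α β : L}

theorem mul_negSnd_add_negFst (h : IsBiquadratic k a b α β) (c : Fin 4 → k) :
    combination k α β c * h.negSnd (combination k α β c)
      + h.negFst (combination k α β c * h.negSnd (combination k α β c))
      = algebraMap k L (2 * pfisterForm a b c) := by
  simp only [map_mul, map_combination, map_neg, negSnd_fst, negSnd_snd, negFst_fst,
    negFst_snd]
  simp only [combination_apply, pfisterForm, map_sub, map_add, map_mul, map_pow, map_ofNat]
  set ι := algebraMap k L
  linear_combination (2 * ι (c 1) ^ 2 - 2 * ι (c 3) ^ 2 * β ^ 2) * h.sq_fst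
    - (2 * ι (c 2) ^ 2 + 2 * ι (c 3) ^ 2 * ι a) * h.sq_snd

theorem mul_negSnd_add_negFst_ne_zero (h : IsBiquadratic k a b α β) (hchar : (2 : k) ≠ 0)
    (haniso : ∀ x y z : k, x ^ 2 + a * y ^ 2 - b * z ^ 2 = 0 → x = 0 ∧ y = 0 ∧ z = 0)
    {x : L} (hx : x ≠ 0) : x * h.negSnd x + h.negFst (x * h.negSnd x) ≠ 0 := by
  obtain ⟨c, rfl⟩ := h.bijective.surjective x
  rw [h.mul_negSnd_add_negFst, map_ne_zero]
  refine mul_ne_zero hchar fun hc => hx ?_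
  rw [eq_zero_of_pfisterForm_eq_zero haniso hc, map_zero]

theorem notMem_relNormPreimage (h : IsBiquadratic k a b α β) (hchar : (2 : k) ≠ 0)
    (haniso : ∀ x y z : k, x ^ 2 + a * y ^ 2 - b * z ^ 2 = 0 → x = 0 ∧ y = 0 ∧ z = 0)
    {u : Lˣ} (hu : relNorm (h.negSnd : L →* L) u = -1) :
    u ∉ relNormPreimage (h.negSnd : L →* L) h.negFst := by
  intro hmem
  obtain ⟨x, hx⟩ := Subgroup.mem_comap.mp hmem
  set n := relNorm (h.negSnd : L →* L) x
  have hn : Units.map (h.negFst : L →* L) n = -n := by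
    have : Units.map (h.negFst : L →* L) n / n = -1 := hx.trans hu
    rw [div_eq_iff_eq_mul.mp this, neg_one_mul]
  have hn' := congrArg Units.val hn
  simp only [n, relNorm, Units.coe_map, MonoidHom.mul_apply, MonoidHom.id_apply, Units.val_mul,
    Units.val_neg, MonoidHom.coe_coe] at hn'
  exact h.mul_negSnd_add_negFst_ne_zero hchar haniso x.ne_zero (by linear_combination hn')

theorem map_div_mem_relNormPreimage (h : IsBiquadratic k a b α β) (σ : L →ₐ[k] L) (x : Lˣ) :
    Units.map (σ : L →* L) x / x ∈ relNormPreimage (h.negSnd : L →* L) h.negFst := by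
  have hτ := h.negSnd_negSnd
  rcases h.algHom_eq_id_or_negSnd_or_negFst_or_comp σ with rfl | rfl | rfl | rfl
  · refine Biquadratic.map_div_mem_relNormPreimage hτ ?_ (.inl ?_) x
    exacts [fun _ => rfl, fun _ _ => rfl]
  · refine Biquadratic.map_div_mem_relNormPreimage hτ ?_ (.inl ?_) x
    exacts [fun _ => rfl, fun _ hm => hm]
  · refine Biquadratic.map_div_mem_relNormPreimage hτ ?_ (.inr ?_) x
    exacts [h.negFst_negSnd_comm, fun _ _ => rfl]
  · refine Biquadratic.map_div_mem_relNormPreimage hτ ?_ (.inr ?_) x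
    exacts [fun _ => by simp [negFst_negSnd_comm], fun _ hm => congrArg h.negFst hm]

end IsBiquadratic

end Biquadratic

/-- Let `k` be a field of characteristic `≠ 2` containing `i` with
`i² = -1`, and let `L = k(√a, √b)` with `[L : k] = 4`.  If the quadratic form
`x² + a y² - b z²` is anisotropic over `k`, then `i` (viewed in `L`) has norm `1` and
its class in `ᴺL^× / I_G L^×` is nontrivial, i.e. `i` does not lie in the subgroup of
`L^×` generated by the elements `σ(x)/x` for `σ ∈ Gal(L/k)` and `x ∈ L^×`. -/
theorem biquadratic_norm_one_nontrivial {k L : Type} [Field k] [Field L] [Algebra k L]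
    [FiniteDimensional k L]
    (hchar : (2 : k) ≠ 0) (i : k) (hi : i ^ 2 = -1) (a b : k)
    (α β : L) (hα : α ^ 2 = algebraMap k L a) (hβ : β ^ 2 = algebraMap k L b)
    (hgen : Algebra.adjoin k {α, β} = ⊤)
    (hdim : Module.finrank k L = 4)
    (haniso : ∀ x y z : k, x ^ 2 + a * y ^ 2 - b * z ^ 2 = 0 → x = 0 ∧ y = 0 ∧ z = 0) :
    Algebra.norm k (algebraMap k L i) = 1 ∧
    ∀ u : Lˣ, (u : L) = algebraMap k L i →
      u ∉ Subgroup.closure {w : Lˣ | ∃ (σ : L ≃ₐ[k] L) (x : Lˣ), (w : L) = σ x / x} := by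
  have h : Biquadratic.IsBiquadratic k a b α β :=
    ⟨hα, hβ, Biquadratic.combination_bijective hα hβ hgen hdim⟩
  refine ⟨by rw [Algebra.norm_algebraMap, hdim, show i ^ 4 = (i ^ 2) ^ 2 by ring, hi, neg_one_sq],
    fun u hu hmem => ?_⟩
  have hI : Subgroup.closure {w : Lˣ | ∃ (σ : L ≃ₐ[k] L) (x : Lˣ), (w : L) = σ x / x}
      ≤ Biquadratic.relNormPreimage (h.negSnd : L →* L) h.negFst := by
    rw [Subgroup.closure_le]
    rintro w ⟨σ, x, hw⟩
    obtain rfl : w = Units.map ((σ : L →ₐ[k] L) : L →* L) x / x := Units.ext (by simp [hw])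
    exact h.map_div_mem_relNormPreimage σ x
  refine h.notMem_relNormPreimage hchar haniso ?_ (hI hmem)
  ext
  simp [Biquadratic.relNorm, hu, ← sq, ← map_pow, hi]
end

section
/- Let L/k be a finite Galois field extension whose Galois group G = Gal(L/k) has order 4 and exponent 2 (i.e., G ≅ ℤ/2 × ℤ/2). Then the group ᴺL^× / I_G L^× is annihilated by 2: for every α ∈ L^× with N_{L/k}(α) = 1, the element α² lies in the subgroup of L^× generated by the elements σ(x)/x with σ ∈ G and x ∈ L^×. -/
/-- If `L/k` is a finite Galois extension whose Galois group has order
`4` and exponent `2`, then `ᴺL^× / I_G L^×` is annihilated by `2`: for every `α ∈ L^×`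
of norm `1`, the element `α²` lies in the subgroup of `L^×` generated by the elements
`σ(x)/x` with `σ ∈ Gal(L/k)` and `x ∈ L^×`. -/
theorem biquadratic_tate_two_torsion {k L : Type} [Field k] [Field L] [Algebra k L]
    [FiniteDimensional k L] [IsGalois k L]
    (hcard : Nat.card (L ≃ₐ[k] L) = 4)
    (hexp : ∀ σ : L ≃ₐ[k] L, σ * σ = 1) :
    ∀ u : Lˣ, Algebra.norm k (u : L) = 1 →
      u ^ 2 ∈ Subgroup.closure {w : Lˣ | ∃ (σ : L ≃ₐ[k] L) (x : Lˣ), (w : L) = σ x / x} := by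
  intro u hnorm
  classical
  let G := L ≃ₐ[k] L
  set S : Set Lˣ := {w : Lˣ | ∃ (σ : G) (x : Lˣ), (w : L) = σ x / x} with hS
  have hinv : ∀ g : G, g⁻¹ = g := fun g => inv_eq_of_mul_eq_one_right (hexp g)
  have hcard' : Fintype.card G = 4 := by rw [← Nat.card_eq_fintype_card]; exact hcard
  obtain ⟨σ, hσ1⟩ := Fintype.exists_ne_of_one_lt_card (by omega) (1 : G)
  have hτex : ∃ τ : G, τ ≠ 1 ∧ τ ≠ σ := by
    by_contra h
    push_neg at h
    have hsub : (Finset.univ : Finset G) ⊆ {1, σ} := by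
      intro g _
      rcases eq_or_ne g 1 with h1 | h1
      · simp [h1]
      · simp [h g h1]
    have h3 := Finset.card_le_card hsub
    have h2 : ({1, σ} : Finset G).card ≤ 2 :=
      (Finset.card_insert_le _ _).trans (by simp)
    rw [Finset.card_univ, hcard'] at h3
    omega
  obtain ⟨τ, hτ1, hτσ⟩ := hτex
  have hcomm : τ * σ = σ * τ := by
    calc τ * σ = τ⁻¹ * σ⁻¹ := by rw [hinv, hinv]
    _ = (σ * τ)⁻¹ := (mul_inv_rev σ τ).symm
    _ = σ * τ := hinv _
  have hστ1 : σ * τ ≠ 1 := by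
    intro h
    have : σ = τ := by rw [eq_inv_of_mul_eq_one_left h, hinv]
    exact hτσ this.symm
  have hστσ : σ * τ ≠ σ := by
    intro h
    exact hτ1 (mul_left_cancel (h.trans (mul_one σ).symm))
  have hσττ : σ * τ ≠ τ := by
    intro h
    exact hσ1 (mul_right_cancel (h.trans (one_mul τ).symm))
  have huniv : (Finset.univ : Finset G) = {1, σ, τ, σ * τ} := by
    symm
    apply Finset.eq_univ_of_card
    rw [hcard']
    rw [Finset.card_insert_of_notMem (by simp [Ne.symm hσ1, Ne.symm hτ1, Ne.symm hστ1]),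
      Finset.card_insert_of_notMem (by simp [Ne.symm hτσ, Ne.symm hστσ]),
      Finset.card_insert_of_notMem (by simp [Ne.symm hσττ]),
      Finset.card_singleton]
  have hP : ∏ g : G, g (u : L) = 1 := by
    have h := Algebra.norm_eq_prod_automorphisms k ((u : L))
    rw [hnorm, map_one] at h
    exact h.symm
  rw [huniv, Finset.prod_insert (by simp [Ne.symm hσ1, Ne.symm hτ1, Ne.symm hστ1]),
    Finset.prod_insert (by simp [Ne.symm hτσ, Ne.symm hστσ]),
    Finset.prod_insert (by simp [Ne.symm hσττ]), Finset.prod_singleton,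
    AlgEquiv.one_apply] at hP
  -- hP : ↑u * (σ ↑u * (τ ↑u * (σ * τ) ↑u)) = 1
  have hmapne : ∀ (g : G) (x : Lˣ), g (x : L) ≠ 0 := by
    intro g x h
    exact x.ne_zero (g.injective (h.trans (map_zero g).symm))
  set w : Lˣ := Units.mk0 (σ (u : L)) (hmapne σ u) with hw
  have hwval : (w : L) = σ (u : L) := rfl
  set b : Lˣ := u * w with hb
  have hbval : (b : L) = (u : L) * σ (u : L) := by rw [hb, Units.val_mul, hwval]
  have hw2 : u * w⁻¹ ∈ Subgroup.closure S := by
    apply Subgroup.subset_closure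
    refine ⟨σ, w, ?_⟩
    have hσσ : σ (w : L) = (u : L) := by
      rw [hwval]
      calc σ (σ (u : L)) = (σ * σ) (u : L) := (AlgEquiv.mul_apply σ σ _).symm
      _ = (u : L) := by rw [hexp σ]; exact AlgEquiv.one_apply _
    rw [Units.val_mul, Units.val_inv_eq_inv_val, hσσ, div_eq_mul_inv]
  have hbt : (b : L) * τ (b : L) = 1 := by
    have h1 : τ (σ (u : L)) = σ (τ (u : L)) := by
      calc τ (σ (u : L)) = (τ * σ) (u : L) := (AlgEquiv.mul_apply τ σ _).symm
      _ = (σ * τ) (u : L) := by rw [hcomm]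
      _ = σ (τ (u : L)) := AlgEquiv.mul_apply σ τ _
    have h2 : (σ * τ) (u : L) = σ (τ (u : L)) := AlgEquiv.mul_apply σ τ _
    rw [hbval, map_mul, h1]
    rw [h2] at hP
    linear_combination hP
  have hbne : (b : L) ≠ 0 := b.ne_zero
  have hbmem : b ∈ Subgroup.closure S := by
    by_cases hc : (1 : L) + (b : L) = 0
    · -- b = -1
      have hbneg : (b : L) = -1 := eq_neg_of_add_eq_zero_right hc
      obtain ⟨d, hd⟩ : ∃ d : L, τ d ≠ d := by
        by_contra h
        push_neg at h
        exact hτ1 (AlgEquiv.ext fun x => (h x).trans (AlgEquiv.one_apply x).symm)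
      have hc0 : d - τ d ≠ 0 := sub_ne_zero.mpr (Ne.symm hd)
      have hττd : τ (τ d) = d := by
        calc τ (τ d) = (τ * τ) d := (AlgEquiv.mul_apply τ τ _).symm
        _ = d := by rw [hexp τ]; exact AlgEquiv.one_apply _
      have hτc : τ (d - τ d) = -(d - τ d) := by
        rw [map_sub, hττd]; ring
      apply Subgroup.subset_closure
      refine ⟨τ, Units.mk0 (d - τ d) hc0, ?_⟩
      show (b : L) = τ (d - τ d) / (d - τ d)
      rw [hbneg, hτc, neg_div, div_self hc0]
    · -- c = 1 + b, then τ(c)/c = b⁻¹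
      have hτb : τ ((b : Lˣ) : L) = ((b : L))⁻¹ := (inv_eq_of_mul_eq_one_right hbt).symm
      have hbinv : (b⁻¹ : Lˣ) ∈ S := by
        refine ⟨τ, Units.mk0 ((1 : L) + (b : L)) hc, ?_⟩
        show ((b⁻¹ : Lˣ) : L) = τ ((1 : L) + (b : L)) / ((1 : L) + (b : L))
        rw [Units.val_inv_eq_inv_val, map_add, map_one, hτb]
        field_simp
        ring
      have h := Subgroup.subset_closure hbinv
      simpa using (Subgroup.closure S).inv_mem h
  have key : u ^ 2 = b * (u * w⁻¹) := by
    rw [sq, hb, mul_mul_mul_comm]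
    simp
  rw [key]
  exact Subgroup.mul_mem _ hbmem hw2
end

section
/- Let 𝔽 be a finite field of characteristic 2, let k = 𝔽((s)) be the field of formal Laurent series over 𝔽, and let L be a finite separable field extension of k. Let L' be a field extension of L containing an element σ with σ² = s (the image of s in L') such that L' = L(σ). Then every element of L is a square in L': for every α ∈ L there exists β ∈ L' with β² = α. -/
/-!
Over a perfect field of characteristic 2 every power series is `g² + X h²` (split it into even
and odd parts), hence every Laurent series is `u² + s v²`, i.e. a square in any extension
containing `√s`. The squares of `L'` form a subfield containing `k` and all squares of `L`; since
`L/k` is separable, `L` is spanned over `k` by the squares of its elements, so the image of `L`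
lies in that subfield.
-/

open PowerSeries

theorem PowerSeries.eq_expand_two_add_X_mul_expand_two {R : Type*} [CommRing R] (f : R⟦X⟧) :
    f = expand 2 two_ne_zero (mk fun n ↦ coeff (2 * n) f) +
      X * expand 2 two_ne_zero (mk fun n ↦ coeff (2 * n + 1) f) := by
  ext (_ | n)
  · simp
  · simp only [map_add, coeff_succ_X_mul, coeff_expand, coeff_mk]
    split_ifs <;> first | omega | simp only [add_zero, zero_add]
    · congr; omega
    · congr; omega

theorem PowerSeries.expand_eq_pow_map_frobeniusEquiv_symm {R : Type*} [CommRing R] (p : ℕ)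
    [ExpChar R p] [PerfectRing R p] (f : R⟦X⟧) :
    expand p (expChar_ne_zero R p) f = map (frobeniusEquiv R p).symm.toRingHom f ^ p := by
  rw [← MvPowerSeries.map_frobenius_expand p (expChar_ne_zero R p)]
  change _ = map _ (expand _ _ _)
  rw [map_expand]
  congr
  ext n
  simp

theorem PowerSeries.exists_eq_sq_add_X_mul_sq {R : Type*} [CommRing R] [ExpChar R 2]
    [PerfectRing R 2] (f : R⟦X⟧) : ∃ g h : R⟦X⟧, f = g ^ 2 + X * h ^ 2 :=
  ⟨_, _, (eq_expand_two_add_X_mul_expand_two f).trans <| by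
    rw [expand_eq_pow_map_frobeniusEquiv_symm, expand_eq_pow_map_frobeniusEquiv_symm]⟩

theorem exists_eq_sq_add_mul_sq_of_isFractionRing {A K : Type*} [CommRing A] [Field K]
    [Algebra A K] [IsFractionRing A K] (s : A) (h : ∀ a : A, ∃ u v : A, a = u ^ 2 + s * v ^ 2)
    (c : K) : ∃ u v : K, c = u ^ 2 + algebraMap A K s * v ^ 2 := by
  obtain ⟨a, b, hb, rfl⟩ := IsFractionRing.div_surjective (A := A) c
  obtain ⟨u, v, huv⟩ := h (a * b)
  have hb' : algebraMap A K b ≠ 0 :=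
    (IsLocalization.map_units K (⟨b, hb⟩ : nonZeroDivisors A)).ne_zero
  refine ⟨algebraMap A K u / algebraMap A K b, algebraMap A K v / algebraMap A K b, ?_⟩
  field_simp
  simpa using congrArg (algebraMap A K) huv

theorem LaurentSeries.exists_eq_sq_add_single_mul_sq {F : Type*} [Field F] [ExpChar F 2]
    [PerfectRing F 2] (c : LaurentSeries F) :
    ∃ u v : LaurentSeries F, c = u ^ 2 + HahnSeries.single 1 1 * v ^ 2 := by
  have hX : algebraMap F⟦X⟧ (LaurentSeries F) X = HahnSeries.single 1 1 :=
    HahnSeries.ofPowerSeries_X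
  exact hX ▸ exists_eq_sq_add_mul_sq_of_isFractionRing X exists_eq_sq_add_X_mul_sq c

theorem exists_pow_eq_algebraMap_of_isSeparable {k L L' : Type*} [Field k] [Field L] [Field L']
    [Algebra k L] [Algebra k L'] [Algebra L L'] [IsScalarTower k L L'] [Algebra.IsSeparable k L]
    (p : ℕ) [ExpChar k p] (hk : ∀ c : k, ∃ β : L', β ^ p = algebraMap k L' c) (α : L) :
    ∃ β : L', β ^ p = algebraMap L L' α := by
  have : ExpChar L' p := expChar_of_injective_algebraMap (algebraMap k L').injective p
  let pthPowers : Subalgebra k L' := { (frobenius L' p).rangeS with algebraMap_mem' := hk }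
  have hspan : Submodule.span k (Set.range fun x : L ↦ x ^ p ^ 1) = ⊤ :=
    Field.span_map_pow_expChar_pow_eq_top_of_isSeparable p 1 (by simp)
  have hle : Submodule.span k (Set.range fun x : L ↦ x ^ p ^ 1) ≤
      Subalgebra.toSubmodule (pthPowers.comap (IsScalarTower.toAlgHom k L L')) := by
    rw [Submodule.span_le]
    rintro _ ⟨x, rfl⟩
    exact ⟨algebraMap L L' x, by simp [frobenius_def]⟩
  exact hle (hspan ▸ Submodule.mem_top : α ∈ _)

theorem laurent_sqrt_extension_general {F : Type} [Field F] [Fintype F] [CharP F 2]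
    {L L' : Type} [Field L] [Field L']
    [Algebra (LaurentSeries F) L]
    [Algebra.IsSeparable (LaurentSeries F) L]
    [Algebra L L'] [Algebra (LaurentSeries F) L'] [IsScalarTower (LaurentSeries F) L L']
    (σ : L')
    (hσ : σ ^ 2 = algebraMap (LaurentSeries F) L' (HahnSeries.single (1 : ℤ) (1 : F))) :
    ∀ α : L, ∃ β : L', β ^ 2 = algebraMap L L' α := by
  have : ExpChar (LaurentSeries F) 2 :=
    expChar_of_injective_algebraMap (algebraMap F (LaurentSeries F)).injective 2
  have : ExpChar L' 2 :=
    expChar_of_injective_algebraMap (algebraMap (LaurentSeries F) L').injective 2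
  refine exists_pow_eq_algebraMap_of_isSeparable (k := LaurentSeries F) 2 fun c ↦ ?_
  obtain ⟨u, v, rfl⟩ := LaurentSeries.exists_eq_sq_add_single_mul_sq c
  refine ⟨algebraMap _ L' u + σ * algebraMap _ L' v, ?_⟩
  rw [add_pow_expChar (algebraMap _ L' u), mul_pow, hσ, map_add, map_mul, map_pow, map_pow]

/-- Let `𝔽` be a finite field of characteristic `2`, `k = 𝔽((s))`,
`L/k` a finite separable extension, and `L' = L(σ)` with `σ² = s`.  Then every element
of `L` is a square in `L'`. -/
theorem laurent_sqrt_extension {F : Type} [Field F] [Fintype F] [CharP F 2]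
    {L L' : Type} [Field L] [Field L']
    [Algebra (LaurentSeries F) L] [FiniteDimensional (LaurentSeries F) L]
    [Algebra.IsSeparable (LaurentSeries F) L]
    [Algebra L L'] [Algebra (LaurentSeries F) L'] [IsScalarTower (LaurentSeries F) L L']
    (σ : L')
    (hσ : σ ^ 2 = algebraMap (LaurentSeries F) L' (HahnSeries.single (1 : ℤ) (1 : F)))
    (hgen : Algebra.adjoin L {σ} = ⊤) :
    ∀ α : L, ∃ β : L', β ^ 2 = algebraMap L L' α :=
  laurent_sqrt_extension_general σ hσ
end

section
/- Let Γ be a finite tree whose vertex set V is partitioned into two parts 𝒫 and 𝒰 such that every edge joins a vertex of 𝒫 to a vertex of 𝒰 and every vertex of 𝒫 has degree exactly 2. Let (Λ, ≤) be a partially ordered set and let κ : V → Λ be a labeling such that κ(u) ≤ κ(p) whenever u ∈ 𝒰 and p ∈ 𝒫 are adjacent. Call (Γ, κ) monotonic if there exists a vertex v₀ (a root) such that κ(v) ≤ κ(w) whenever v is the parent of w with respect to v₀ (i.e., v and w are adjacent and v lies on the unique path from v₀ to w). Then (Γ, κ) is monotonic if and only if there exists an injective map ψ : 𝒫 → 𝒰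 such that for every p ∈ 𝒫, ψ(p) is adjacent to p and κ(ψ(p)) = κ(p). -/
open SimpleGraph Walk

section TreePathAux

variable {V : Type} [DecidableEq V] {Γ : SimpleGraph V}

/-- The distinguished path between two vertices of a connected graph. -/
noncomputable def treePath (hconn : Γ.Connected) (v w : V) : Γ.Walk v w :=
  ((hconn.preconnected v w).some.toPath : Γ.Path v w).1

lemma treePath_isPath (hconn : Γ.Connected) (v w : V) : (treePath hconn v w).IsPath :=
  ((hconn.preconnected v w).some.toPath : Γ.Path v w).2

lemma treePath_unique (hconn : Γ.Connected) (hacyc : Γ.IsAcyclic) {v w : V}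
    (q : Γ.Walk v w) (hq : q.IsPath) : q = treePath hconn v w := by
  have := hacyc.path_unique ⟨q, hq⟩ ⟨treePath hconn v w, treePath_isPath hconn v w⟩
  exact congrArg Subtype.val this

lemma treePath_self (hconn : Γ.Connected) (hacyc : Γ.IsAcyclic) (v : V) :
    treePath hconn v v = Walk.nil :=
  (treePath_unique hconn hacyc Walk.nil IsPath.nil).symm

omit [DecidableEq V] in
lemma isPath_concat' {a b c : V} {q : Γ.Walk a b} (hq : q.IsPath) (h : Γ.Adj b c)
    (hw : c ∉ q.support) : (q.concat h).IsPath := by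
  rw [← isPath_reverse_iff, reverse_concat]
  exact hq.reverse.cons (by simpa [support_reverse] using hw)

/-- If `v` is adjacent to `w` and lies on the tree path from `v₀` to `w`, then the
tree path to `w` is the tree path to `v` followed by the edge. -/
lemma par_concat (hconn : Γ.Connected) (hacyc : Γ.IsAcyclic) {v₀ v w : V}
    (ha : Γ.Adj v w) (hm : v ∈ (treePath hconn v₀ w).support) :
    treePath hconn v₀ w = (treePath hconn v₀ v).concat ha := by
  set P := treePath hconn v₀ w with hP
  have hPp : P.IsPath := treePath_isPath hconn v₀ w
  have hdrop : P.dropUntil v hm = Walk.cons ha Walk.nil := by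
    have h1 : (P.dropUntil v hm).IsPath := hPp.dropUntil hm
    have h2 : (Walk.cons ha Walk.nil : Γ.Walk v w).IsPath :=
      IsPath.nil.cons (by simp [ha.ne])
    have := hacyc.path_unique ⟨P.dropUntil v hm, h1⟩ ⟨Walk.cons ha Walk.nil, h2⟩
    exact congrArg Subtype.val this
  have htake : P.takeUntil v hm = treePath hconn v₀ v :=
    treePath_unique hconn hacyc _ (hPp.takeUntil hm)
  calc P = (P.takeUntil v hm).append (P.dropUntil v hm) := (take_spec P hm).symm
    _ = (treePath hconn v₀ v).append (Walk.cons ha Walk.nil) := by rw [hdrop, htake]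
    _ = (treePath hconn v₀ v).concat ha := (concat_eq_append _ _).symm

lemma par_length (hconn : Γ.Connected) (hacyc : Γ.IsAcyclic) {v₀ v w : V}
    (ha : Γ.Adj v w) (hm : v ∈ (treePath hconn v₀ w).support) :
    (treePath hconn v₀ w).length = (treePath hconn v₀ v).length + 1 := by
  rw [par_concat hconn hacyc ha hm, length_concat]

/-- Uniqueness of the parent. -/
lemma par_unique (hconn : Γ.Connected) (hacyc : Γ.IsAcyclic) {v₀ v v' w : V}
    (ha : Γ.Adj v w) (hm : v ∈ (treePath hconn v₀ w).support)
    (ha' : Γ.Adj v' w) (hm' : v' ∈ (treePath hconn v₀ w).support) : v = v' := by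
  have h1 := par_concat hconn hacyc ha hm
  have h2 := par_concat hconn hacyc ha' hm'
  exact (concat_inj (h1.symm.trans h2)).1

/-- Existence of the parent for a non-root vertex. -/
lemma exists_parent (hconn : Γ.Connected) {v₀ w : V} (hne : w ≠ v₀) :
    ∃ g, ∃ h : Γ.Adj g w, g ∈ (treePath hconn v₀ w).support := by
  have hnil : ¬ (treePath hconn v₀ w).Nil := not_nil_of_ne (Ne.symm hne)
  obtain ⟨x, h, q, hq⟩ := not_nil_iff.mp hnil
  obtain ⟨g, q', h', hcq⟩ := exists_cons_eq_concat h q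
  refine ⟨g, h', ?_⟩
  rw [hq, hcq, support_concat]
  simp [end_mem_support]

/-- Existence of a child for a vertex of degree 2. -/
lemma exists_child [Fintype V] [DecidableRel Γ.Adj] (hconn : Γ.Connected)
    (hacyc : Γ.IsAcyclic) {v₀ v : V} (hdeg2 : Γ.degree v = 2) :
    ∃ u, ∃ h : Γ.Adj v u, v ∈ (treePath hconn v₀ u).support := by
  by_cases hvv : v = v₀
  · subst hvv
    have hdpos : 0 < (Γ.neighborFinset v).card := by
      rw [card_neighborFinset_eq_degree, hdeg2]; norm_num
    obtain ⟨u, hu⟩ := Finset.card_pos.mp hdpos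
    exact ⟨u, by rwa [mem_neighborFinset] at hu, start_mem_support _⟩
  · obtain ⟨g, hg, hgs⟩ := exists_parent hconn hvv
    have h2 : 1 < (Γ.neighborFinset v).card := by
      rw [card_neighborFinset_eq_degree, hdeg2]; norm_num
    obtain ⟨u, hu, hug⟩ := Finset.exists_mem_ne h2 g
    have hadj : Γ.Adj v u := by rwa [mem_neighborFinset] at hu
    have hnot : u ∉ (treePath hconn v₀ v).support := fun hmem =>
      hug (par_unique hconn hacyc hadj.symm hmem hg hgs)
    have hpath := isPath_concat' (treePath_isPath hconn v₀ v) hadj hnot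
    have heq : (treePath hconn v₀ v).concat hadj = treePath hconn v₀ u :=
      treePath_unique hconn hacyc _ hpath
    refine ⟨u, hadj, ?_⟩
    rw [← heq, support_concat]
    simp [end_mem_support]

end TreePathAux

/-- Let `Γ` be a finite tree whose vertex set is partitioned into
`𝒫` (`p v = true`) and `𝒰` (`p v = false`) with every edge joining `𝒫` to `𝒰` and
every vertex of `𝒫` of degree `2`.  Let `κ` be a labeling of the vertices in a poset
`Λ` such that `κ u ≤ κ q` whenever `u ∈ 𝒰` and `q ∈ 𝒫` are adjacent.  Then `(Γ, κ)` is
monotonic (there is a root `v₀` such that `κ v ≤ κ w` whenever `v` is the parent of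
`w`, i.e. `v` and `w` are adjacent and `v` lies on every path from `v₀` to `w`) if and
only if there is an injection `ψ : 𝒫 → 𝒰` with `ψ q` adjacent to `q` and
`κ (ψ q) = κ q` for all `q ∈ 𝒫`. -/
theorem monotonic_iff_injection {V : Type} [Fintype V] (Γ : SimpleGraph V)
    [DecidableRel Γ.Adj]
    (hconn : Γ.Connected) (hacyc : Γ.IsAcyclic)
    (p : V → Bool) (hbip : ∀ u v : V, Γ.Adj u v → p u ≠ p v)
    (hdeg : ∀ v : V, p v = true → Γ.degree v = 2)
    {Λ : Type} [PartialOrder Λ] (κ : V → Λ)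
    (hκ : ∀ u q : V, Γ.Adj u q → p u = false → p q = true → κ u ≤ κ q) :
    (∃ v₀ : V, ∀ v w : V, Γ.Adj v w →
        (∀ q : Γ.Walk v₀ w, q.IsPath → v ∈ q.support) → κ v ≤ κ w) ↔
    (∃ ψ : {v : V // p v = true} → {v : V // p v = false},
        Function.Injective ψ ∧
        ∀ P : {v : V // p v = true}, Γ.Adj P.1 (ψ P).1 ∧ κ (ψ P).1 = κ P.1) := by
  classical
  constructor
  · rintro ⟨v₀, hmono⟩
    have hex : ∀ P : {v : V // p v = true}, ∃ u : {v : V // p v = false},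
        Γ.Adj P.1 u.1 ∧ P.1 ∈ (treePath hconn v₀ u.1).support ∧ κ u.1 = κ P.1 := by
      intro P
      obtain ⟨u, hadj, hsup⟩ := exists_child hconn hacyc (v₀ := v₀) (hdeg P.1 P.2)
      have hpu : p u = false := by
        have := hbip P.1 u hadj
        rw [P.2] at this
        cases h : p u
        · rfl
        · exact absurd h.symm this
      have h1 : κ P.1 ≤ κ u := hmono P.1 u hadj (fun q hq => by
        rw [treePath_unique hconn hacyc q hq]; exact hsup)
      have h2 : κ u ≤ κ P.1 := hκ u P.1 hadj.symm hpu P.2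
      exact ⟨⟨u, hpu⟩, hadj, hsup, le_antisymm h2 h1⟩
    choose ψ hψadj hψsup hψκ using hex
    refine ⟨ψ, ?_, fun P => ⟨hψadj P, hψκ P⟩⟩
    intro P₁ P₂ h
    apply Subtype.ext
    have hsup₂ : P₂.1 ∈ (treePath hconn v₀ (ψ P₁).1).support := by
      rw [h]; exact hψsup P₂
    have hadj₂ : Γ.Adj P₂.1 (ψ P₁).1 := by rw [h]; exact hψadj P₂
    exact par_unique hconn hacyc (hψadj P₁) (hψsup P₁) hadj₂ hsup₂
  · rintro ⟨ψ, hinj, hψ⟩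
    -- there is a vertex in 𝒰
    have hUne : ∃ u', p u' = false := by
      obtain ⟨v⟩ := hconn.nonempty
      cases hv : p v
      · exact ⟨v, hv⟩
      · have hdpos : 0 < (Γ.neighborFinset v).card := by
          rw [card_neighborFinset_eq_degree, hdeg v hv]; norm_num
        obtain ⟨u, hu⟩ := Finset.card_pos.mp hdpos
        have hadj : Γ.Adj v u := by rwa [mem_neighborFinset] at hu
        have h := hbip v u hadj
        rw [hv] at h
        cases h' : p u
        · exact ⟨u, h'⟩
        · rw [h'] at h; exact absurd rfl h
    obtain ⟨r, hr⟩ := hUne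
    -- the "child" map, injective and missing `r`, gives the cardinality inequality
    have cmap : ∀ P : {v : V // p v = true}, ∃ u : {v : V // p v = false},
        Γ.Adj P.1 u.1 ∧ P.1 ∈ (treePath hconn r u.1).support := by
      intro P
      obtain ⟨u, hadj, hsup⟩ := exists_child hconn hacyc (v₀ := r) (hdeg P.1 P.2)
      have hpu : p u = false := by
        have := hbip P.1 u hadj
        rw [P.2] at this
        cases h : p u
        · rfl
        · exact absurd h.symm this
      exact ⟨⟨u, hpu⟩, hadj, hsup⟩
    choose c hcadj hcsup using cmap
    have hcinj : Function.Injective c := by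
      intro P₁ P₂ h
      apply Subtype.ext
      have hsup₂ : P₂.1 ∈ (treePath hconn r (c P₁).1).support := by
        rw [h]; exact hcsup P₂
      have hadj₂ : Γ.Adj P₂.1 (c P₁).1 := by rw [h]; exact hcadj P₂
      exact par_unique hconn hacyc (hcadj P₁) (hcsup P₁) hadj₂ hsup₂
    have hcr : (⟨r, hr⟩ : {v : V // p v = false}) ∉ Set.range c := by
      rintro ⟨P, hP⟩
      have h1 : P.1 ∈ (treePath hconn r r).support := by
        have := hcsup P
        rwa [show (c P).1 = r from congrArg Subtype.val hP] at this
      rw [treePath_self hconn hacyc] at h1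
      simp only [support_nil, List.mem_singleton] at h1
      have : Γ.Adj P.1 r := by
        have := hcadj P
        rwa [show (c P).1 = r from congrArg Subtype.val hP] at this
      rw [h1] at this
      exact Γ.irrefl this
    have hcard : Fintype.card {v : V // p v = true} < Fintype.card {v : V // p v = false} :=
      Fintype.card_lt_of_injective_of_notMem c hcinj hcr
    have hns : ¬ Function.Surjective ψ := fun hs =>
      absurd (Fintype.card_le_of_surjective ψ hs) (not_le.mpr hcard)
    rw [Function.Surjective] at hns
    push_neg at hns
    obtain ⟨u₀, hu₀⟩ := hns
    -- key claim: no `P` is matched to its parent (relative to root `u₀`)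
    have key : ∀ n (P : {v : V // p v = true}), (treePath hconn u₀.1 P.1).length = n →
        (ψ P).1 ∉ (treePath hconn u₀.1 P.1).support := by
      intro n
      induction n using Nat.strong_induction_on with
      | _ n ih =>
        intro P hn hmem
        have hadj : Γ.Adj (ψ P).1 P.1 := (hψ P).1.symm
        have hLu : (treePath hconn u₀.1 (ψ P).1).length + 1 = n := by
          rw [← hn, par_length hconn hacyc hadj hmem]
        have hne : (ψ P).1 ≠ u₀.1 := fun h => hu₀ P (Subtype.ext h)
        obtain ⟨g, hg, hgs⟩ := exists_parent hconn hne
        have hLg : (treePath hconn u₀.1 g).length + 1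
            = (treePath hconn u₀.1 (ψ P).1).length :=
          (par_length hconn hacyc hg hgs).symm
        have hpg : p g = true := by
          have h1 := hbip g (ψ P).1 hg
          have h2 := (ψ P).2
          cases h : p g
          · rw [h, h2] at h1; exact absurd rfl h1
          · rfl
        set P' : {v : V // p v = true} := ⟨g, hpg⟩ with hP'
        have hψP'u : (ψ P').1 ≠ (ψ P).1 := by
          intro h
          have hPP' : P' = P := hinj (Subtype.ext h)
          have hgP : g = P.1 := congrArg Subtype.val hPP'
          rw [hgP, hn] at hLg
          omega
        have hgne : g ≠ u₀.1 := by
          intro h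
          rw [h, u₀.2] at hpg
          exact Bool.false_ne_true hpg
        obtain ⟨g', hg'adj, hg's⟩ := exists_parent hconn hgne
        have hLg' : (treePath hconn u₀.1 g').length + 1
            = (treePath hconn u₀.1 g).length :=
          (par_length hconn hacyc hg'adj hg's).symm
        have hg'ne : g' ≠ (ψ P).1 := by intro h; rw [h] at hLg'; omega
        have hnbr : Γ.neighborFinset g = {g', (ψ P).1} := by
          refine (Finset.eq_of_subset_of_card_le ?_ ?_).symm
          · intro x hx
            simp only [Finset.mem_insert, Finset.mem_singleton] at hx
            rcases hx with rfl | rfl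
            · exact (mem_neighborFinset ..).mpr hg'adj.symm
            · exact (mem_neighborFinset ..).mpr hg
          · rw [card_neighborFinset_eq_degree, hdeg g hpg,
              Finset.card_insert_of_notMem (by simp [hg'ne]), Finset.card_singleton]
        have hmemψ : (ψ P').1 ∈ Γ.neighborFinset g :=
          (mem_neighborFinset ..).mpr (hψ P').1
        rw [hnbr] at hmemψ
        simp only [Finset.mem_insert, Finset.mem_singleton] at hmemψ
        have hψg' : (ψ P').1 = g' := by tauto
        exact ih (treePath hconn u₀.1 g).length (by omega) P' rfl
          (by rw [hψg']; exact hg's)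
    -- conclude monotonicity with root `u₀`
    refine ⟨u₀.1, ?_⟩
    intro v w hadj hall
    have hm : v ∈ (treePath hconn u₀.1 w).support :=
      hall _ (treePath_isPath hconn u₀.1 w)
    cases hpv : p v
    · have hpw : p w = true := by
        have h := hbip v w hadj
        rw [hpv] at h
        cases h' : p w
        · rw [h'] at h; exact absurd rfl h
        · rfl
      exact hκ v w hadj hpv hpw
    · have hvne : v ≠ u₀.1 := by
        intro h
        rw [h, u₀.2] at hpv
        exact Bool.false_ne_true hpv
      obtain ⟨g, hg, hgs⟩ := exists_parent hconn hvne
      have hLv : (treePath hconn u₀.1 g).length + 1 = (treePath hconn u₀.1 v).length :=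
        (par_length hconn hacyc hg hgs).symm
      have hLw : (treePath hconn u₀.1 w).length = (treePath hconn u₀.1 v).length + 1 :=
        par_length hconn hacyc hadj hm
      have hwg : w ≠ g := by intro h; rw [h] at hLw; omega
      set P : {v : V // p v = true} := ⟨v, hpv⟩ with hPdef
      have hψg : (ψ P).1 ≠ g := by
        intro h
        exact key (treePath hconn u₀.1 v).length P rfl (by rw [h]; exact hgs)
      have hnbr : Γ.neighborFinset v = {g, w} := by
        refine (Finset.eq_of_subset_of_card_le ?_ ?_).symm
        · intro x hx
          simp only [Finset.mem_insert, Finset.mem_singleton] at hx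
          rcases hx with rfl | rfl
          · exact (mem_neighborFinset ..).mpr hg.symm
          · exact (mem_neighborFinset ..).mpr hadj
        · rw [card_neighborFinset_eq_degree, hdeg v hpv,
            Finset.card_insert_of_notMem (by simp only [Finset.mem_singleton]; exact fun h => hwg h.symm),
            Finset.card_singleton]
      have hmemψ : (ψ P).1 ∈ Γ.neighborFinset v :=
        (mem_neighborFinset ..).mpr (hψ P).1
      rw [hnbr] at hmemψ
      simp only [Finset.mem_insert, Finset.mem_singleton] at hmemψ
      have hψw : (ψ P).1 = w := by tauto
      have hκw : κ w = κ v := by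
        have := (hψ P).2
        rwa [hψw] at this
      exact le_of_eq hκw.symm
end
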